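/- arXiv:1204.5776 — 10 statements merged into one kernel-verified Lean document; each statement's English description precedes it below -/
import Mathlib

section
/- Let n be a natural number and let s be the standard sign assignment on the n-dimensional cube. Then δs = 1₂; explicitly: for every vertex v ∈ (ZMod 2)^n and every pair of distinct coordinates i ≠ j in Fin n with v i = 0 and v j = 0, the sum of the values of s over the four edges of the 2-dimensional face spanned by coordinates i and j at v equals 1 in ZMod 2, i.e. s(v,i) + s(v,j) + s(v + δⱼ, i) + s(v + δᵢ, j) = 1, where δᵢ denotes the vertex which is 1 in coordinate i and 0 elsewhere. (Equivalently, in the paper's notation: for any vertices v ≤₂ u of the cube {0,1}^n with intermediate vertices w ≠ w′, one has s(C_{u,w}) + s(C_{w,v}) + s(C_{u,w′}) + s(C_{w′,v}) = 1.) -/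
/-- The vertex of the cube `(ZMod 2)ⁿ` which is `1` in coordinate `i` and `0` elsewhere. -/
def cubeDelta {n : ℕ} (i : Fin n) : Fin n → ZMod 2 :=
  fun l => if l = i then 1 else 0

/-- The standard sign assignment: to the edge from `v` to `v + δᵢ` (for a vertex `v` with
`v i = 0`) it assigns `s(v, i) = Σ_{l < i} v l ∈ ZMod 2`. -/
def standardSign {n : ℕ} (v : Fin n → ZMod 2) (i : Fin n) : ZMod 2 :=
  ∑ l ∈ Finset.univ.filter (fun l => l < i), v l

lemma standardSign_add_delta {n : ℕ} (v : Fin n → ZMod 2) (i j : Fin n) :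
    standardSign (v + cubeDelta j) i = standardSign v i + if j < i then 1 else 0 := by
  unfold standardSign cubeDelta
  simp only [Pi.add_apply]
  rw [Finset.sum_add_distrib]
  congr 1
  rw [Finset.sum_ite_eq' (Finset.univ.filter (fun l => l < i)) j (fun _ => (1 : ZMod 2))]
  simp

/-- `δs = 1₂`: the standard sign assignment sums to `1` over the four edges of any
2-dimensional face of the cube. -/
theorem standardSign_coboundary_eq_one {n : ℕ} (v : Fin n → ZMod 2) (i j : Fin n)
    (hij : i ≠ j) (hvi : v i = 0) (hvj : v j = 0) :
    standardSign v i + standardSign v j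
      + standardSign (v + cubeDelta j) i + standardSign (v + cubeDelta i) j = 1 := by
  rw [standardSign_add_delta, standardSign_add_delta]
  have h2 : ∀ x : ZMod 2, x + x = 0 := by decide
  have h2 : (2 : ZMod 2) = 0 := rfl
  rcases lt_or_gt_of_ne hij with h | h
  · rw [if_pos h, if_neg (not_lt.mpr h.le)]
    ring_nf; rw [h2]; ring
  · rw [if_neg (not_lt.mpr h.le), if_pos h]
    ring_nf; rw [h2]; ring
end

section
/- Let n be a natural number, let s be the standard sign assignment and f the standard frame assignment on the n-dimensional cube. Then for any vertex v ∈ (ZMod 2)^n and any three coordinates i < j < k in Fin n with v i = v j = v k = 0, the coboundary of f evaluated on the 3-dimensional cell spanned by i, j, k at v equals the sum of s over the three edges emanating from v inside this cell; explicitly: f(v; i, j) + f(v + δₖ; i, j) + f(v; i, k) + f(v + δⱼ; i, k) + f(v; j, k) + f(v + δᵢ; j, k) = s(v, i) + s(v, j) + s(v, k) in ZMod 2 (the left-hand side being the sum of f over the six 2-dimensional faces of the 3-cell). Here δᵢ denotes the vertex which is 1 in coordinate i and 0 elsewhere. -/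
/-- The standard frame assignment: to the 2-dimensional face from `v` to `v + δᵢ + δⱼ`
(for `i < j` and `v i = v j = 0`) it assigns
`f(v; i, j) = (Σ_{l < i} v l) · (Σ_{i < l < j} v l) ∈ ZMod 2`. -/
def standardFrame {n : ℕ} (v : Fin n → ZMod 2) (i j : Fin n) : ZMod 2 :=
  (∑ l ∈ Finset.univ.filter (fun l => l < i), v l) *
    (∑ l ∈ Finset.univ.filter (fun l => i < l ∧ l < j), v l)


lemma sum_add_delta {n : ℕ} (v : Fin n → ZMod 2) (m : Fin n) (S : Finset (Fin n)) :
    ∑ l ∈ S, (v + cubeDelta m) l = (∑ l ∈ S, v l) + if m ∈ S then 1 else 0 := by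
  simp [cubeDelta, Finset.sum_add_distrib, Finset.sum_ite_eq' S m (fun _ => (1:ZMod 2))]

lemma split_lt {n : ℕ} (v : Fin n → ZMod 2) {i j : Fin n} (hij : i < j) :
    ∑ l ∈ Finset.univ.filter (fun l => l < j), v l
      = (∑ l ∈ Finset.univ.filter (fun l => l < i), v l) + v i
        + ∑ l ∈ Finset.univ.filter (fun l => i < l ∧ l < j), v l := by
  have h1 : Finset.univ.filter (fun l => l < j)
      = Finset.univ.filter (fun l : Fin n => l < i)
        ∪ insert i (Finset.univ.filter fun l => i < l ∧ l < j) := by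
    ext l
    simp only [Finset.mem_filter, Finset.mem_union, Finset.mem_insert, Finset.mem_univ,
      true_and, Fin.lt_def, Fin.ext_iff] at *
    omega
  have hd : Disjoint (Finset.univ.filter (fun l : Fin n => l < i))
      (insert i (Finset.univ.filter fun l => i < l ∧ l < j)) := by
    simp only [Finset.disjoint_left, Finset.mem_filter, Finset.mem_insert, Finset.mem_univ,
      true_and, Fin.lt_def, Fin.ext_iff]
    omega
  have hni : i ∉ (Finset.univ.filter fun l : Fin n => i < l ∧ l < j) := by simp
  rw [h1, Finset.sum_union hd, Finset.sum_insert hni, ← add_assoc]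

lemma split_between {n : ℕ} (v : Fin n → ZMod 2) {i j k : Fin n} (hij : i < j) (hjk : j < k) :
    ∑ l ∈ Finset.univ.filter (fun l => i < l ∧ l < k), v l
      = (∑ l ∈ Finset.univ.filter (fun l => i < l ∧ l < j), v l) + v j
        + ∑ l ∈ Finset.univ.filter (fun l => j < l ∧ l < k), v l := by
  have h1 : Finset.univ.filter (fun l => i < l ∧ l < k)
      = Finset.univ.filter (fun l : Fin n => i < l ∧ l < j)
        ∪ insert j (Finset.univ.filter fun l => j < l ∧ l < k) := by
    ext l
    simp only [Finset.mem_filter, Finset.mem_union, Finset.mem_insert, Finset.mem_univ,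
      true_and, Fin.lt_def, Fin.ext_iff] at *
    omega
  have hd : Disjoint (Finset.univ.filter (fun l : Fin n => i < l ∧ l < j))
      (insert j (Finset.univ.filter fun l => j < l ∧ l < k)) := by
    simp only [Finset.disjoint_left, Finset.mem_filter, Finset.mem_insert, Finset.mem_univ,
      true_and, Fin.lt_def, Fin.ext_iff]
    omega
  have hnj : j ∉ (Finset.univ.filter fun l : Fin n => j < l ∧ l < k) := by simp
  rw [h1, Finset.sum_union hd, Finset.sum_insert hnj, ← add_assoc]

/-- The coboundary of the standard frame assignment, evaluated on the 3-dimensional cell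
spanned by coordinates `i < j < k` at a vertex `v` (the sum of `f` over its six
2-dimensional faces), equals the sum of the standard sign assignment over the three edges
emanating from `v` inside this cell. -/
theorem standardFrame_coboundary {n : ℕ} (v : Fin n → ZMod 2) (i j k : Fin n)
    (hij : i < j) (hjk : j < k) (hvi : v i = 0) (hvj : v j = 0) (hvk : v k = 0) :
    standardFrame v i j + standardFrame (v + cubeDelta k) i j
      + standardFrame v i k + standardFrame (v + cubeDelta j) i k
      + standardFrame v j k + standardFrame (v + cubeDelta i) j k
      = standardSign v i + standardSign v j + standardSign v k := by
  have hik : i < k := hij.trans hjk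
  have nki : ¬ k < i := not_lt.2 hik.le
  have nkj : ¬ k < j := not_lt.2 hjk.le
  have nji : ¬ j < i := not_lt.2 hij.le
  simp only [standardFrame, standardSign, sum_add_delta, split_lt v hij, split_lt v hik,
    split_between v hij hjk, Finset.mem_filter, Finset.mem_univ, true_and,
    hij, hjk, hik, nki, nkj, nji, hvi, hvj, hvk, if_true, if_false, and_true, and_false,
    true_and, false_and, if_pos, and_self, not_false_iff]
  generalize (∑ l ∈ Finset.univ.filter (fun l : Fin n => l < i), v l) = A
  generalize (∑ l ∈ Finset.univ.filter (fun l : Fin n => i < l ∧ l < j), v l) = B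
  generalize (∑ l ∈ Finset.univ.filter (fun l : Fin n => j < l ∧ l < k), v l) = C
  revert A B C
  decide
end

section
/- Let a₁, a₂, a₃, b₁, b₂, b₃, b₄, b₅, b₆, c₁, c₂, c₃, f₁, f₂, f₃, g₁, g₂, g₃ be elements of ZMod 2 satisfying the six sign-assignment relations a₁ + a₂ + b₁ + b₃ = 1, a₁ + a₃ + b₂ + b₅ = 1, a₂ + a₃ + b₄ + b₆ = 1, b₁ + b₂ + c₁ + c₂ = 1, b₃ + b₄ + c₁ + c₃ = 1, b₅ + b₆ + c₂ + c₃ = 1, and the frame-assignment relation f₁ + f₂ + f₃ + g₁ + g₂ + g₃ = c₁ + c₂ + c₃. Then (f₁ + f₂ + f₃ + g₁ + g₂ + g₃) + (b₁ + b₂ + b₃ + b₄ + b₅ + b₆) + (b₁c₁ + b₃c₁ + b₄c₃ + b₆c₃ + b₅c₂ + b₂c₂) + (a₁c₁ + a₂c₁ + a₂c₃ + a₃c₃ + a₃c₂ + a₁c₂) = 1. -/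
set_option maxRecDepth 100000 in
/-- The addition computing the homology class `h_{u,v} ∈ H₁(SO(3d+1); F₂)` of the framed
boundary of the hexagonal moduli space equals `1`, given the six sign-assignment relations
(`δs = 1₂` on each 2-face of the 3-cube) and the frame-assignment-sum relation. -/
theorem hexagon_framing_sum_eq_one
    (a₁ a₂ a₃ b₁ b₂ b₃ b₄ b₅ b₆ c₁ c₂ c₃ f₁ f₂ f₃ g₁ g₂ g₃ : ZMod 2)
    (h₁ : a₁ + a₂ + b₁ + b₃ = 1)
    (h₂ : a₁ + a₃ + b₂ + b₅ = 1)
    (h₃ : a₂ + a₃ + b₄ + b₆ = 1)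
    (h₄ : b₁ + b₂ + c₁ + c₂ = 1)
    (h₅ : b₃ + b₄ + c₁ + c₃ = 1)
    (h₆ : b₅ + b₆ + c₂ + c₃ = 1)
    (h₇ : f₁ + f₂ + f₃ + g₁ + g₂ + g₃ = c₁ + c₂ + c₃) :
    (f₁ + f₂ + f₃ + g₁ + g₂ + g₃) + (b₁ + b₂ + b₃ + b₄ + b₅ + b₆)
      + (b₁ * c₁ + b₃ * c₁ + b₄ * c₃ + b₆ * c₃ + b₅ * c₂ + b₂ * c₂)
      + (a₁ * c₁ + a₂ * c₁ + a₂ * c₃ + a₃ * c₃ + a₃ * c₂ + a₁ * c₂) = 1 := by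
  have two : (2 : ZMod 2) = 0 := by decide
  linear_combination h₇ + (c₁ + 1) * h₁ + (c₂ + 1) * h₂ + (c₃ + 1) * h₃
    + (c₁ + c₂ + c₃ + 1 - a₁ - a₂ - a₃) * two
end

section
/- Let A, B, C be finite-dimensional vector spaces over F₂ = ZMod 2, and let f : A →ₗ B, g : B →ₗ C, s : A →ₗ C be linear maps with g ∘ f = 0. Then there exist natural numbers s₁, s₂, s₃, p₁, p₂, x₁, x₂, x₃, x₄ and linear equivalences α : A ≃ A₀, β : B ≃ B₀, γ : C ≃ C₀ onto the underlying spaces of the direct sum quiver Q₀ = s₁·(S-1) ⊕ s₂·(S-2) ⊕ s₃·(S-3) ⊕ p₁·(P-1) ⊕ p₂·(P-2) ⊕ x₁·(X-1) ⊕ x₂·(X-2) ⊕ x₃·(X-3) ⊕ x₄·(X-4), such that β ∘ f = f₀ ∘ α, γ ∘ g = g₀ ∘ β, and γ ∘ s = s₀ ∘ α, where (f₀, g₀, s₀) are the structure maps of Q₀. In other words, every quiver (A, B, C, f, g, s) over F₂ with gf = 0 is isomorphic to a finite direct sum of the nine indecomposable quivers (S-1), (S-2), (S-3), (P-1), (P-2),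 (X-1), (X-2), (X-3), (X-4). -/
/-! Concrete model for the direct sum
`s₁·(S-1) ⊕ s₂·(S-2) ⊕ s₃·(S-3) ⊕ p₁·(P-1) ⊕ p₂·(P-2) ⊕ x₁·(X-1) ⊕ x₂·(X-2) ⊕ x₃·(X-3) ⊕ x₄·(X-4)`
of the nine indecomposable quivers over `F₂ = ZMod 2`, where
(S-1) = (F₂,0,0), (S-2) = (0,F₂,0), (S-3) = (0,0,F₂) (all maps zero);
(P-1) = (F₂,F₂,0) with f = id; (P-2) = (0,F₂,F₂) with g = id;
(X-1) = (F₂,0,F₂) with s = id; (X-2) = (F₂,F₂,F₂) with f = id, s = id, g = 0;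
(X-3) = (F₂,F₂,F₂) with f = 0, g = id, s = id;
(X-4) = (F₂,F₂⊕F₂,F₂) with f x = (x,0), g (y₁,y₂) = y₂, s = id. -/

abbrev F2 := ZMod 2

/-- The `A`-space of the direct sum quiver: one `F₂` summand for each copy of
(S-1), (P-1), (X-1), (X-2), (X-3), (X-4). -/
abbrev QA (s₁ p₁ x₁ x₂ x₃ x₄ : ℕ) :=
  (Fin s₁ → F2) × (Fin p₁ → F2) × (Fin x₁ → F2) × (Fin x₂ → F2) × (Fin x₃ → F2) ×
    (Fin x₄ → F2)

/-- The `B`-space of the direct sum quiver: one `F₂` summand for each copy of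
(S-2), (P-1), (P-2), (X-2), (X-3), and one `F₂ ⊕ F₂` summand for each copy of (X-4). -/
abbrev QB (s₂ p₁ p₂ x₂ x₃ x₄ : ℕ) :=
  (Fin s₂ → F2) × (Fin p₁ → F2) × (Fin p₂ → F2) × (Fin x₂ → F2) × (Fin x₃ → F2) ×
    (Fin x₄ → F2 × F2)

/-- The `C`-space of the direct sum quiver: one `F₂` summand for each copy of
(S-3), (P-2), (X-1), (X-2), (X-3), (X-4). -/
abbrev QC (s₃ p₂ x₁ x₂ x₃ x₄ : ℕ) :=
  (Fin s₃ → F2) × (Fin p₂ → F2) × (Fin x₁ → F2) × (Fin x₂ → F2) × (Fin x₃ → F2) ×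
    (Fin x₄ → F2)

/-- The structure map `f₀ : A₀ → B₀` of the direct sum quiver. -/
def fQ {s₁ s₂ p₁ p₂ x₁ x₂ x₃ x₄ : ℕ} :
    QA s₁ p₁ x₁ x₂ x₃ x₄ →ₗ[F2] QB s₂ p₁ p₂ x₂ x₃ x₄ where
  toFun a := (0, a.2.1, 0, a.2.2.2.1, 0, fun m => (a.2.2.2.2.2 m, 0))
  map_add' a b := by ext <;> simp
  map_smul' c a := by ext <;> simp

/-- The structure map `g₀ : B₀ → C₀` of the direct sum quiver. -/
def gQ {s₂ s₃ p₁ p₂ x₁ x₂ x₃ x₄ : ℕ} :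
    QB s₂ p₁ p₂ x₂ x₃ x₄ →ₗ[F2] QC s₃ p₂ x₁ x₂ x₃ x₄ where
  toFun b := (0, b.2.2.1, 0, 0, b.2.2.2.2.1, fun m => (b.2.2.2.2.2 m).2)
  map_add' a b := by ext <;> simp
  map_smul' c a := by ext <;> simp

/-- The structure map `s₀ : A₀ → C₀` of the direct sum quiver. -/
def sQ {s₁ s₃ p₁ p₂ x₁ x₂ x₃ x₄ : ℕ} :
    QA s₁ p₁ x₁ x₂ x₃ x₄ →ₗ[F2] QC s₃ p₂ x₁ x₂ x₃ x₄ where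
  toFun a := (0, 0, a.2.2.1, a.2.2.2.1, a.2.2.2.2.1, a.2.2.2.2.2)
  map_add' a b := by ext <;> simp
  map_smul' c a := by ext <;> simp

/-- The quiver `(A, B, C, f, g, s)` is isomorphic to the direct sum of the nine
indecomposable quivers with multiplicities `(s₁, s₂, s₃, p₁, p₂, x₁, x₂, x₃, x₄)`. -/
def IsQuiverDecomposition
    (A B C : Type) [AddCommGroup A] [Module F2 A]
    [AddCommGroup B] [Module F2 B] [AddCommGroup C] [Module F2 C]
    (f : A →ₗ[F2] B) (g : B →ₗ[F2] C) (s : A →ₗ[F2] C)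
    (s₁ s₂ s₃ p₁ p₂ x₁ x₂ x₃ x₄ : ℕ) : Prop :=
  ∃ (α : A ≃ₗ[F2] QA s₁ p₁ x₁ x₂ x₃ x₄)
    (β : B ≃ₗ[F2] QB s₂ p₁ p₂ x₂ x₃ x₄)
    (γ : C ≃ₗ[F2] QC s₃ p₂ x₁ x₂ x₃ x₄),
    (∀ a, β (f a) = fQ (α a)) ∧ (∀ b, γ (g b) = gQ (β b)) ∧ (∀ a, γ (s a) = sQ (α a))

/-! Choose bases adapted to the quiver. In `C`, with `S = s (ker f) ⊆ T = range s` and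
`G = range g`, take a basis of `S ∩ G` (the X-3 part) and extend it to bases of `S` (X-1), of
`T ∩ G` (X-4), then of `T` (X-2), `G` (P-2) and `C` (S-3). Lifting the basis of `T`
along `s`, with the part spanning `S` lifted into `ker f`, and adding a basis of `ker s` that
extends one of `ker f ∩ ker s` (S-1, P-1) gives a basis of `A`. The key point is that `f` is
injective on the span of the P-1, X-2 and X-4 vectors: the `s`-image of a vector of `ker f` there
lies in `S` and in the span of the `s`-images of the X-2 and X-4 vectors, a complement of `S` in
`T`, so the vector lies in the span of the P-1 vectors, which meets `ker f` trivially. Hence `f`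
maps these vectors to a basis of `range f ⊆ ker g`; extending it to `ker g` (S-2) and adding lifts
along `g` of the basis of `G` gives a basis of `B`. In these bases `f`, `g` and `s` are the
structure maps of the direct sum. -/

open Submodule
open LinearMap (ker range mem_ker range_eq_map)

section BasisFamilies

variable {K V W X : Type*} [DivisionRing K] [AddCommGroup V] [Module K V] [AddCommGroup W]
  [Module K W] [AddCommGroup X] [Module K X] {ι κ μ ν : Type*}

def IsBasisOf (U : Submodule K V) (v : ι → V) : Prop :=
  LinearIndependent K v ∧ span K (Set.range v) = U

namespace IsBasisOf

variable {U p q : Submodule K V} {u : ι → V} {v : κ → V} {w : μ → V}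

theorem mem (h : IsBasisOf U v) (i : κ) : v i ∈ U :=
  h.2 ▸ subset_span (Set.mem_range_self i)

theorem linearIndependent_right (h : IsBasisOf U (Sum.elim u v)) : LinearIndependent K v :=
  (linearIndependent_sum.1 h.1).2.1

theorem disjoint_sum_elim (h : IsBasisOf U (Sum.elim u v)) :
    Disjoint (span K (Set.range u)) (span K (Set.range v)) :=
  (linearIndependent_sum.1 h.1).2.2

theorem sum_elim (hu : IsBasisOf p u) (hv : IsBasisOf q v) (hpq : Disjoint p q) :
    IsBasisOf (p ⊔ q) (Sum.elim u v) :=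
  ⟨hu.1.sum_type hv.1 (hu.2 ▸ hv.2 ▸ hpq), by rw [Set.Sum.elim_range, span_union, hu.2, hv.2]⟩

theorem of_range_eq [Fintype κ] [Fintype μ] (h : IsBasisOf U v) (hr : Set.range w = Set.range v)
    (hc : Fintype.card μ = Fintype.card κ) : IsBasisOf U w := by
  refine ⟨?_, hr ▸ h.2⟩
  rw [linearIndependent_iff_card_eq_finrank_span, hr, hc,
    ← linearIndependent_iff_card_eq_finrank_span]
  exact h.1

theorem sum_elim_of_inf (hp : IsBasisOf p u) (hq : IsBasisOf q (Sum.elim v w))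
    (hv : span K (Set.range v) = p ⊓ q) : IsBasisOf (p ⊔ q) (Sum.elim u w) := by
  have hw : span K (Set.range w) ≤ q := hq.2 ▸ span_mono (by simp [Set.Sum.elim_range])
  have hd : Disjoint p (span K (Set.range w)) := by
    rw [disjoint_iff, ← inf_eq_right.2 hw, ← inf_assoc, ← hv]
    exact disjoint_iff.1 hq.disjoint_sum_elim
  have hsup : p ⊔ span K (Set.range w) = p ⊔ q := by
    rw [← hq.2, Set.Sum.elim_range, span_union, hv, ← sup_assoc, sup_inf_self]
  exact hsup ▸ hp.sum_elim ⟨hq.linearIndependent_right, rfl⟩ hd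

end IsBasisOf

theorem exists_isBasisOf [FiniteDimensional K V] (U : Submodule K V) :
    ∃ (n : ℕ) (v : Fin n → V), IsBasisOf U v := by
  let b := Module.finBasis K U
  refine ⟨_, U.subtype ∘ b, b.linearIndependent.map' U.subtype U.ker_subtype, ?_⟩
  rw [Set.range_comp, ← Submodule.map_span, b.span_eq, Submodule.map_top, range_subtype]

theorem exists_le_disjoint_sup_eq {α : Type*} [Lattice α] [BoundedOrder α] [IsModularLattice α]
    [ComplementedLattice α] {p q : α} (h : p ≤ q) : ∃ r ≤ q, Disjoint p r ∧ p ⊔ r = q := by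
  obtain ⟨r, hr⟩ := exists_isCompl (⟨p, h⟩ : Set.Iic q)
  exact ⟨r, r.2, disjoint_iff.2 (congrArg Subtype.val hr.inf_eq_bot),
    congrArg Subtype.val hr.sup_eq_top⟩

theorem IsBasisOf.exists_extend [FiniteDimensional K V] {p q : Submodule K V} {u : ι → V}
    (hu : IsBasisOf p u) (h : p ≤ q) :
    ∃ (n : ℕ) (w : Fin n → V), IsBasisOf q (Sum.elim u w) := by
  obtain ⟨r, -, hd, rfl⟩ := exists_le_disjoint_sup_eq h
  obtain ⟨n, w, hw⟩ := exists_isBasisOf r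
  exact ⟨n, w, hu.sum_elim hw hd⟩

theorem disjoint_span_ker_of_linearIndependent_comp {φ : V →ₗ[K] W} {v : ι → V}
    (h : LinearIndependent K (φ ∘ v)) : Disjoint (span K (Set.range v)) (ker φ) := by
  rw [disjoint_def]
  rintro _ hx hxφ
  rw [← Finsupp.range_linearCombination] at hx
  obtain ⟨c, rfl⟩ := hx
  rw [mem_ker, Finsupp.apply_linearCombination] at hxφ
  rw [linearIndependent_iff.1 h c hxφ, map_zero]

theorem IsBasisOf.top_sum_elim_of_range {φ : V →ₗ[K] W} {u : ι → V} {v : κ → V}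
    (hu : IsBasisOf (ker φ) u) (hv : IsBasisOf (range φ) (φ ∘ v)) :
    IsBasisOf (⊤ : Submodule K V) (Sum.elim u v) := by
  have hsup : ker φ ⊔ span K (Set.range v) = ⊤ := by
    rw [sup_comm, ← comap_map_eq, Submodule.map_span, ← Set.range_comp, hv.2, range_eq_map,
      comap_map_eq, top_sup_eq]
  exact hsup ▸ hu.sum_elim ⟨hv.1.of_comp φ, rfl⟩
    (disjoint_span_ker_of_linearIndependent_comp hv.1).symm

theorem IsBasisOf.range_comp {φ : V →ₗ[K] W} {u : ι → V} {v : κ → V}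
    (h : IsBasisOf (⊤ : Submodule K V) (Sum.elim u v)) (hu : ∀ i, u i ∈ ker φ)
    (hv : Disjoint (span K (Set.range v)) (ker φ)) : IsBasisOf (range φ) (φ ∘ v) := by
  refine ⟨h.linearIndependent_right.map hv, ?_⟩
  have hu' : span K (Set.range u) ≤ ker φ := span_le.2 (Set.range_subset_iff.2 hu)
  rw [range_eq_map, ← h.2, Set.Sum.elim_range, span_union, Submodule.map_sup,
    LinearMap.le_ker_iff_map.1 hu', bot_sup_eq, Submodule.map_span, Set.range_comp]

theorem exists_comp_eq_of_forall_mem_map {φ : V →ₗ[K] W} {p : Submodule K V} {c : ι → W}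
    (h : ∀ i, c i ∈ p.map φ) : ∃ v : ι → V, (∀ i, v i ∈ p) ∧ c = φ ∘ v := by
  choose v hv hφ using fun i => mem_map.1 (h i)
  exact ⟨v, hv, funext fun i => (hφ i).symm⟩

theorem exists_comp_eq_of_forall_mem_range {φ : V →ₗ[K] W} {c : ι → W}
    (h : ∀ i, c i ∈ range φ) : ∃ v : ι → V, c = φ ∘ v :=
  Set.range_subset_range_iff_exists_comp.1 (Set.range_subset_iff.2 h)

theorem exists_isBasisOf_adapted [FiniteDimensional K V] {S T : Submodule K V} (hST : S ≤ T)
    (G : Submodule K V) :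
    ∃ (n₁ n₂ n₃ n₄ n₅ n₆ : ℕ) (v₁ : Fin n₁ → V) (v₂ : Fin n₂ → V) (v₃ : Fin n₃ → V)
      (v₄ : Fin n₄ → V) (v₅ : Fin n₅ → V) (v₆ : Fin n₆ → V),
      IsBasisOf S (Sum.elim v₁ v₂) ∧ IsBasisOf T (Sum.elim (Sum.elim v₁ v₂) (Sum.elim v₃ v₄)) ∧
      IsBasisOf G (Sum.elim (Sum.elim v₁ v₃) v₅) ∧
      IsBasisOf (⊤ : Submodule K V)
        (Sum.elim (Sum.elim (Sum.elim (Sum.elim v₁ v₂) (Sum.elim v₃ v₄)) v₅) v₆) := by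
  obtain ⟨n₁, v₁, h₁⟩ := exists_isBasisOf (S ⊓ G)
  obtain ⟨n₂, v₂, hS⟩ := h₁.exists_extend inf_le_left
  obtain ⟨n₃, v₃, hI⟩ := h₁.exists_extend (inf_le_inf_right G hST)
  have hSI := hS.sum_elim_of_inf hI (by rw [h₁.2, ← inf_assoc, inf_eq_left.2 hST])
  obtain ⟨n₄, v₄, hT⟩ := hSI.exists_extend (sup_le hST inf_le_left)
  replace hT := hT.of_range_eq (w := Sum.elim (Sum.elim v₁ v₂) (Sum.elim v₃ v₄))
    (by simp only [Set.Sum.elim_range, Set.union_assoc])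
    (by simp only [Fintype.card_sum, add_assoc])
  obtain ⟨n₅, v₅, hG⟩ := hI.exists_extend inf_le_right
  obtain ⟨n₆, v₆, hC⟩ := (hT.sum_elim_of_inf hG hI.2).exists_extend le_top
  exact ⟨n₁, n₂, n₃, n₄, n₅, n₆, v₁, v₂, v₃, v₄, v₅, v₆, hS, hT, hG, hC⟩

theorem disjoint_span_sum_elim_ker {f : V →ₗ[K] W} {s : V →ₗ[K] X} {u : ι → V} {v : κ → V}
    {w : μ → V} (huv : IsBasisOf (ker s) (Sum.elim u v))
    (hu : span K (Set.range u) = ker f ⊓ ker s) (hw : LinearIndependent K (s ∘ w))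
    (hd : Disjoint (span K (Set.range (s ∘ w))) ((ker f).map s)) :
    Disjoint (span K (Set.range (Sum.elim v w))) (ker f) := by
  rw [Set.Sum.elim_range, span_union, disjoint_def]
  intro x hx hxf
  obtain ⟨y, hy, z, hz, rfl⟩ := mem_sup.1 hx
  have hys : y ∈ ker s := span_le.2 (Set.range_subset_iff.2 fun i => huv.mem (.inr i)) hy
  have hsz : s z ∈ (ker f).map s := ⟨y + z, hxf, by rw [map_add, mem_ker.1 hys, zero_add]⟩
  have hsz' : s z ∈ span K (Set.range (s ∘ w)) := by
    rw [Set.range_comp, ← Submodule.map_span]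
    exact mem_map_of_mem hz
  obtain rfl : z = 0 := disjoint_def.1 (disjoint_span_ker_of_linearIndependent_comp hw) z hz
    (disjoint_def.1 hd _ hsz' hsz)
  rw [add_zero] at hxf ⊢
  exact disjoint_def.1 huv.disjoint_sum_elim y (hu ▸ ⟨hxf, hys⟩) hy

theorem isBasisOf_range_comp_sum_elim [Fintype ι] [Fintype κ] [Fintype μ] [Fintype ν]
    {f : V →ₗ[K] W} {s : V →ₗ[K] X} {u : ι → V} {v : κ → V} {a : μ → V} {a' : ν → V}
    (huv : IsBasisOf (ker s) (Sum.elim u v)) (hu : IsBasisOf (ker f ⊓ ker s) u)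
    (ha : ∀ i, a i ∈ ker f) (hS : span K (Set.range (s ∘ a)) = (ker f).map s)
    (hT : IsBasisOf (range s) (s ∘ Sum.elim a a')) :
    IsBasisOf (range f) (f ∘ Sum.elim v a') := by
  have hA : IsBasisOf (⊤ : Submodule K V) (Sum.elim (Sum.elim u a) (Sum.elim v a')) :=
    (huv.top_sum_elim_of_range hT).of_range_eq (by simp only [Set.Sum.elim_range]; ac_rfl)
      (by simp only [Fintype.card_sum]; ac_rfl)
  rw [Sum.comp_elim] at hT
  exact hA.range_comp (Sum.forall.2 ⟨fun i => (hu.mem i).1, ha⟩) <|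
    disjoint_span_sum_elim_ker huv hu.2 hT.linearIndependent_right (hS ▸ hT.disjoint_sum_elim.symm)

end BasisFamilies

section Coordinates

variable {K M : Type*} [Semiring K] [AddCommMonoid M] [Module K M] {ι κ : Type*}

def sumArrowEquivProd (e : (κ → K) ≃ₗ[K] M) : (ι ⊕ κ → K) ≃ₗ[K] (ι → K) × M :=
  LinearEquiv.sumArrowLequivProdArrow ι κ K K ≪≫ₗ (LinearEquiv.refl K (ι → K)).prodCongr e

@[simp] theorem sumArrowEquivProd_symm_apply_inl (e : (κ → K) ≃ₗ[K] M) (x : ι → K) (y : M) (i : ι) :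
    (sumArrowEquivProd e).symm (x, y) (.inl i) = x i := rfl

@[simp] theorem sumArrowEquivProd_symm_apply_inr (e : (κ → K) ≃ₗ[K] M) (x : ι → K) (y : M) (i : κ) :
    (sumArrowEquivProd e).symm (x, y) (.inr i) = e.symm y i := rfl

def sumArrowEquivArrowProd : (ι ⊕ ι → K) ≃ₗ[K] (ι → K × K) where
  toFun u i := (u (.inl i), u (.inr i))
  invFun v := Sum.elim (fun i => (v i).1) (fun i => (v i).2)
  map_add' _ _ := rfl
  map_smul' _ _ := rfl
  left_inv u := by ext (i | i) <;> rfl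
  right_inv _ := rfl

@[simp] theorem sumArrowEquivArrowProd_symm_apply_inl (v : ι → K × K) (i : ι) :
    (sumArrowEquivArrowProd.symm v : ι ⊕ ι → K) (.inl i) = (v i).1 := rfl

@[simp] theorem sumArrowEquivArrowProd_symm_apply_inr (v : ι → K × K) (i : ι) :
    (sumArrowEquivArrowProd.symm v : ι ⊕ ι → K) (.inr i) = (v i).2 := rfl

end Coordinates

theorem isQuiverDecomposition_of_isBasisOf {A B C : Type} [AddCommGroup A] [Module F2 A]
    [AddCommGroup B] [Module F2 B] [AddCommGroup C] [Module F2 C]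
    {f : A →ₗ[F2] B} {g : B →ₗ[F2] C} {s : A →ₗ[F2] C} {s₁ s₂ s₃ p₁ p₂ x₁ x₂ x₃ x₄ : ℕ}
    {aS : Fin s₁ → A} {aP : Fin p₁ → A} {a₁ : Fin x₁ → A} {a₂ : Fin x₂ → A} {a₃ : Fin x₃ → A}
    {a₄ : Fin x₄ → A} {bS : Fin s₂ → B} {bP : Fin p₂ → B} {b₃ : Fin x₃ → B} {b₄ : Fin x₄ → B}
    {cS : Fin s₃ → C}
    (hA : IsBasisOf (⊤ : Submodule F2 A)
      (Sum.elim aS (Sum.elim aP (Sum.elim a₁ (Sum.elim a₂ (Sum.elim a₃ a₄))))))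
    (hB : IsBasisOf (⊤ : Submodule F2 B) (Sum.elim bS (Sum.elim (f ∘ aP) (Sum.elim bP
      (Sum.elim (f ∘ a₂) (Sum.elim b₃ (Sum.elim (f ∘ a₄) b₄)))))))
    (hC : IsBasisOf (⊤ : Submodule F2 C) (Sum.elim cS (Sum.elim (g ∘ bP) (Sum.elim (s ∘ a₁)
      (Sum.elim (s ∘ a₂) (Sum.elim (s ∘ a₃) (s ∘ a₄)))))))
    (hfS : ∀ i, f (aS i) = 0) (hf₁ : ∀ i, f (a₁ i) = 0) (hf₃ : ∀ i, f (a₃ i) = 0)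
    (hgS : ∀ i, g (bS i) = 0) (hgf : g ∘ₗ f = 0) (hg₃ : ∀ i, g (b₃ i) = s (a₃ i))
    (hg₄ : ∀ i, g (b₄ i) = s (a₄ i)) (hsS : ∀ i, s (aS i) = 0) (hsP : ∀ i, s (aP i) = 0) :
    IsQuiverDecomposition A B C f g s s₁ s₂ s₃ p₁ p₂ x₁ x₂ x₃ x₄ := by
  let α := (Module.Basis.mk hA.1 hA.2.ge).equivFun ≪≫ₗ
    sumArrowEquivProd (sumArrowEquivProd (sumArrowEquivProd (sumArrowEquivProd
      (sumArrowEquivProd (LinearEquiv.refl F2 (Fin x₄ → F2))))))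
  let β := (Module.Basis.mk hB.1 hB.2.ge).equivFun ≪≫ₗ
    sumArrowEquivProd (sumArrowEquivProd (sumArrowEquivProd (sumArrowEquivProd
      (sumArrowEquivProd (sumArrowEquivArrowProd (ι := Fin x₄))))))
  let γ := (Module.Basis.mk hC.1 hC.2.ge).equivFun ≪≫ₗ
    sumArrowEquivProd (sumArrowEquivProd (sumArrowEquivProd (sumArrowEquivProd
      (sumArrowEquivProd (LinearEquiv.refl F2 (Fin x₄ → F2))))))
  refine ⟨α, β, γ, fun a => ?_, fun b => ?_, fun a => ?_⟩
  · obtain ⟨⟨u₁, u₂, u₃, u₄, u₅, u₆⟩, rfl⟩ := α.symm.surjective a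
    rw [LinearEquiv.apply_symm_apply, ← LinearEquiv.eq_symm_apply]
    simp [α, β, Fintype.sum_sum_type, fQ, hfS, hf₁, hf₃]
  · obtain ⟨⟨v₁, v₂, v₃, v₄, v₅, v₆⟩, rfl⟩ := β.symm.surjective b
    rw [LinearEquiv.apply_symm_apply, ← LinearEquiv.eq_symm_apply]
    have hgf' : ∀ a, g (f a) = 0 := LinearMap.congr_fun hgf
    simp [β, γ, Fintype.sum_sum_type, gQ, hgS, hgf', hg₃, hg₄]
  · obtain ⟨⟨u₁, u₂, u₃, u₄, u₅, u₆⟩, rfl⟩ := α.symm.surjective a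
    rw [LinearEquiv.apply_symm_apply, ← LinearEquiv.eq_symm_apply]
    simp [α, γ, Fintype.sum_sum_type, sQ, hsS, hsP]

/-- Every quiver `(A, B, C, f, g, s)` of finite-dimensional `F₂`-vector spaces with
`g ∘ f = 0` is isomorphic to a finite direct sum of the nine indecomposable quivers
(S-1), (S-2), (S-3), (P-1), (P-2), (X-1), (X-2), (X-3), (X-4). -/
theorem quiver_decomposes
    (A B C : Type) [AddCommGroup A] [Module F2 A] [FiniteDimensional F2 A]
    [AddCommGroup B] [Module F2 B] [FiniteDimensional F2 B]
    [AddCommGroup C] [Module F2 C] [FiniteDimensional F2 C]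
    (f : A →ₗ[F2] B) (g : B →ₗ[F2] C) (s : A →ₗ[F2] C)
    (hgf : g ∘ₗ f = 0) :
    ∃ s₁ s₂ s₃ p₁ p₂ x₁ x₂ x₃ x₄ : ℕ,
      IsQuiverDecomposition A B C f g s s₁ s₂ s₃ p₁ p₂ x₁ x₂ x₃ x₄ := by
  obtain ⟨x₃, x₁, x₄, x₂, p₂, s₃, c₃, c₁, c₄, c₂, cP, cS, hS, hT, hG, hC⟩ :=
    exists_isBasisOf_adapted (LinearMap.map_le_range : (ker f).map s ≤ range s) (range g)
  obtain ⟨a₃, ha₃, rfl⟩ := exists_comp_eq_of_forall_mem_map (c := c₃) (hS.mem <| .inl ·)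
  obtain ⟨a₁, ha₁, rfl⟩ := exists_comp_eq_of_forall_mem_map (c := c₁) (hS.mem <| .inr ·)
  obtain ⟨a₄, rfl⟩ := exists_comp_eq_of_forall_mem_range (c := c₄) (hT.mem <| .inr <| .inl ·)
  obtain ⟨a₂, rfl⟩ := exists_comp_eq_of_forall_mem_range (c := c₂) (hT.mem <| .inr <| .inr ·)
  obtain ⟨b₃, hb₃⟩ := exists_comp_eq_of_forall_mem_range (c := s ∘ a₃) (hG.mem <| .inl <| .inl ·)
  obtain ⟨b₄, hb₄⟩ := exists_comp_eq_of_forall_mem_range (c := s ∘ a₄) (hG.mem <| .inl <| .inr ·)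
  obtain ⟨bP, rfl⟩ := exists_comp_eq_of_forall_mem_range (c := cP) (hG.mem <| .inr ·)
  simp only [← Sum.comp_elim] at hS hT
  obtain ⟨s₁, aS, haS⟩ := exists_isBasisOf (ker f ⊓ ker s)
  obtain ⟨p₁, aP, hKs⟩ := haS.exists_extend inf_le_right
  have hF := isBasisOf_range_comp_sum_elim hKs haS (Sum.forall.2 ⟨ha₃, ha₁⟩) hS.2 hT
  obtain ⟨s₂, bS, hKg⟩ := hF.exists_extend (LinearMap.range_le_ker_iff.2 hgf)
  have hB := hKg.top_sum_elim_of_range (v := Sum.elim (Sum.elim b₃ b₄) bP)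
    (by simpa only [Sum.comp_elim, hb₃, hb₄] using hG)
  have hA := hKs.top_sum_elim_of_range hT
  refine ⟨s₁, s₂, s₃, p₁, p₂, x₁, x₂, x₃, x₄,
    isQuiverDecomposition_of_isBasisOf (aP := aP) (a₂ := a₂) (bS := bS) (bP := bP) (cS := cS)
      (hA.of_range_eq ?_ ?_) (hB.of_range_eq ?_ ?_) (hC.of_range_eq ?_ ?_) (haS.mem · |>.1) ha₁ ha₃
      (hKg.mem <| .inr ·) hgf (congrFun hb₃.symm) (congrFun hb₄.symm) (haS.mem · |>.2)
      (hKs.mem <| .inr ·)⟩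
  -- `hA`, `hB`, `hC` list the required bases in a different order
  all_goals simp only [Sum.comp_elim, Set.Sum.elim_range, Fintype.card_sum]; ac_rfl
end

section
/- Let A, B, C be finite-dimensional vector spaces over F₂ = ZMod 2 and f : A →ₗ B, g : B →ₗ C, s : A →ₗ C linear maps with g ∘ f = 0. Define d₁ = dim A, d₂ = dim B, d₃ = dim C, r_f = rank f, r_g = rank g, r₁ = dim(im s), r₂ = dim(im(s ∘ ι)) where ι : ker f → A is the inclusion, r₃ = dim(im g ∩ im s), and r₄ = dim(im g ∩ im(s ∘ ι)). If the quiver (A, B, C, f, g, s) is isomorphic to the direct sum s₁·(S-1) ⊕ s₂·(S-2) ⊕ s₃·(S-3) ⊕ p₁·(P-1) ⊕ p₂·(P-2) ⊕ x₁·(X-1) ⊕ x₂·(X-2) ⊕ x₃·(X-3) ⊕ x₄·(X-4) of the nine indecomposable quivers with multiplicities (s₁, s₂, s₃, p₁, p₂, x₁, x₂, x₃, x₄) ∈ ℕ⁹, then these multiplicities satisfy: s₁ + r_f + r₂ = d₁; s₂ + r_f + r_g = d₂; s₃ + r_g + r₁ = d₃ + r₃; p₁ + r₁ = r_f + r₂;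 p₂ + r₃ = r_g; x₁ + r₄ = r₂; x₂ + r₂ + r₃ = r₁ + r₄; x₃ = r₄; and x₄ + r₄ = r₃. -/
open Module LinearMap

namespace QuiverAux

open Module LinearMap Submodule

variable {s₁ s₂ s₃ p₁ p₂ x₁ x₂ x₃ x₄ : ℕ}

/-! ### Injections with obvious retractions, and projections, for the model maps -/

def jf : ((Fin p₁ → F2) × (Fin x₂ → F2) × (Fin x₄ → F2)) →ₗ[F2] QB s₂ p₁ p₂ x₂ x₃ x₄ where
  toFun u := (0, u.1, 0, u.2.1, 0, fun m => (u.2.2 m, 0))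
  map_add' a b := by ext <;> simp
  map_smul' c a := by ext <;> simp

lemma jf_inj : Function.Injective (jf : _ →ₗ[F2] QB s₂ p₁ p₂ x₂ x₃ x₄) :=
  Function.LeftInverse.injective (g := fun b : QB s₂ p₁ p₂ x₂ x₃ x₄ =>
    ((b.2.1, b.2.2.2.1, fun m => (b.2.2.2.2.2 m).1) :
      (Fin p₁ → F2) × (Fin x₂ → F2) × (Fin x₄ → F2))) (fun u => rfl)

def pf : QA s₁ p₁ x₁ x₂ x₃ x₄ →ₗ[F2] ((Fin p₁ → F2) × (Fin x₂ → F2) × (Fin x₄ → F2)) where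
  toFun a := (a.2.1, a.2.2.2.1, a.2.2.2.2.2)
  map_add' a b := rfl
  map_smul' c a := rfl

lemma pf_surj : Function.Surjective (pf : QA s₁ p₁ x₁ x₂ x₃ x₄ →ₗ[F2] _) :=
  fun u => ⟨(0, u.1, 0, u.2.1, 0, u.2.2), rfl⟩

def jg : ((Fin p₂ → F2) × (Fin x₃ → F2) × (Fin x₄ → F2)) →ₗ[F2] QC s₃ p₂ x₁ x₂ x₃ x₄ where
  toFun u := (0, u.1, 0, 0, u.2.1, u.2.2)
  map_add' a b := rfl
  map_smul' c a := rfl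

lemma jg_inj : Function.Injective (jg : _ →ₗ[F2] QC s₃ p₂ x₁ x₂ x₃ x₄) :=
  Function.LeftInverse.injective (g := fun c : QC s₃ p₂ x₁ x₂ x₃ x₄ =>
    ((c.2.1, c.2.2.2.2.1, c.2.2.2.2.2) :
      (Fin p₂ → F2) × (Fin x₃ → F2) × (Fin x₄ → F2))) (fun u => rfl)

def pg : QB s₂ p₁ p₂ x₂ x₃ x₄ →ₗ[F2] ((Fin p₂ → F2) × (Fin x₃ → F2) × (Fin x₄ → F2)) where
  toFun b := (b.2.2.1, b.2.2.2.2.1, fun m => (b.2.2.2.2.2 m).2)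
  map_add' a b := rfl
  map_smul' c a := rfl

lemma pg_surj : Function.Surjective (pg : QB s₂ p₁ p₂ x₂ x₃ x₄ →ₗ[F2] _) :=
  fun u => ⟨(0, 0, u.1, 0, u.2.1, fun m => (0, u.2.2 m)), rfl⟩

def js : ((Fin x₁ → F2) × (Fin x₂ → F2) × (Fin x₃ → F2) × (Fin x₄ → F2)) →ₗ[F2]
    QC s₃ p₂ x₁ x₂ x₃ x₄ where
  toFun u := (0, 0, u.1, u.2.1, u.2.2.1, u.2.2.2)
  map_add' a b := rfl
  map_smul' c a := rfl

lemma js_inj : Function.Injective (js : _ →ₗ[F2] QC s₃ p₂ x₁ x₂ x₃ x₄) :=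
  Function.LeftInverse.injective (g := fun c : QC s₃ p₂ x₁ x₂ x₃ x₄ =>
    ((c.2.2.1, c.2.2.2.1, c.2.2.2.2.1, c.2.2.2.2.2) :
      (Fin x₁ → F2) × (Fin x₂ → F2) × (Fin x₃ → F2) × (Fin x₄ → F2))) (fun u => rfl)

def ps : QA s₁ p₁ x₁ x₂ x₃ x₄ →ₗ[F2]
    ((Fin x₁ → F2) × (Fin x₂ → F2) × (Fin x₃ → F2) × (Fin x₄ → F2)) where
  toFun a := (a.2.2.1, a.2.2.2.1, a.2.2.2.2.1, a.2.2.2.2.2)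
  map_add' a b := rfl
  map_smul' c a := rfl

lemma ps_surj : Function.Surjective (ps : QA s₁ p₁ x₁ x₂ x₃ x₄ →ₗ[F2] _) :=
  fun u => ⟨(0, 0, u.1, u.2.1, u.2.2.1, u.2.2.2), rfl⟩

def jk : ((Fin x₁ → F2) × (Fin x₃ → F2)) →ₗ[F2] QC s₃ p₂ x₁ x₂ x₃ x₄ where
  toFun u := (0, 0, u.1, 0, u.2, 0)
  map_add' a b := rfl
  map_smul' c a := rfl

lemma jk_inj : Function.Injective (jk : _ →ₗ[F2] QC s₃ p₂ x₁ x₂ x₃ x₄) :=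
  Function.LeftInverse.injective (g := fun c : QC s₃ p₂ x₁ x₂ x₃ x₄ =>
    ((c.2.2.1, c.2.2.2.2.1) : (Fin x₁ → F2) × (Fin x₃ → F2))) (fun u => rfl)

def jgs : ((Fin x₃ → F2) × (Fin x₄ → F2)) →ₗ[F2] QC s₃ p₂ x₁ x₂ x₃ x₄ where
  toFun u := (0, 0, 0, 0, u.1, u.2)
  map_add' a b := rfl
  map_smul' c a := rfl

lemma jgs_inj : Function.Injective (jgs : _ →ₗ[F2] QC s₃ p₂ x₁ x₂ x₃ x₄) :=
  Function.LeftInverse.injective (g := fun c : QC s₃ p₂ x₁ x₂ x₃ x₄ =>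
    ((c.2.2.2.2.1, c.2.2.2.2.2) : (Fin x₃ → F2) × (Fin x₄ → F2))) (fun u => rfl)

def jgk : (Fin x₃ → F2) →ₗ[F2] QC s₃ p₂ x₁ x₂ x₃ x₄ where
  toFun u := (0, 0, 0, 0, u, 0)
  map_add' a b := rfl
  map_smul' c a := rfl

lemma jgk_inj : Function.Injective (jgk : _ →ₗ[F2] QC s₃ p₂ x₁ x₂ x₃ x₄) :=
  Function.LeftInverse.injective (g := fun c : QC s₃ p₂ x₁ x₂ x₃ x₄ =>
    c.2.2.2.2.1) (fun u => rfl)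

/-! ### The relevant submodules of the model -/

lemma range_fQ :
    range (fQ : QA s₁ p₁ x₁ x₂ x₃ x₄ →ₗ[F2] QB s₂ p₁ p₂ x₂ x₃ x₄) = range jf := by
  have h : (fQ : QA s₁ p₁ x₁ x₂ x₃ x₄ →ₗ[F2] QB s₂ p₁ p₂ x₂ x₃ x₄) = jf ∘ₗ pf :=
    LinearMap.ext fun a => rfl
  rw [h, LinearMap.range_comp, LinearMap.range_eq_top.mpr pf_surj, Submodule.map_top]

lemma range_gQ :
    range (gQ : QB s₂ p₁ p₂ x₂ x₃ x₄ →ₗ[F2] QC s₃ p₂ x₁ x₂ x₃ x₄) = range jg := by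
  have h : (gQ : QB s₂ p₁ p₂ x₂ x₃ x₄ →ₗ[F2] QC s₃ p₂ x₁ x₂ x₃ x₄) = jg ∘ₗ pg :=
    LinearMap.ext fun a => rfl
  rw [h, LinearMap.range_comp, LinearMap.range_eq_top.mpr pg_surj, Submodule.map_top]

lemma range_sQ :
    range (sQ : QA s₁ p₁ x₁ x₂ x₃ x₄ →ₗ[F2] QC s₃ p₂ x₁ x₂ x₃ x₄) = range js := by
  have h : (sQ : QA s₁ p₁ x₁ x₂ x₃ x₄ →ₗ[F2] QC s₃ p₂ x₁ x₂ x₃ x₄) = js ∘ₗ ps :=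
    LinearMap.ext fun a => rfl
  rw [h, LinearMap.range_comp, LinearMap.range_eq_top.mpr ps_surj, Submodule.map_top]

lemma map_sQ_ker_fQ :
    Submodule.map (sQ : QA s₁ p₁ x₁ x₂ x₃ x₄ →ₗ[F2] QC s₃ p₂ x₁ x₂ x₃ x₄)
      (ker (fQ : QA s₁ p₁ x₁ x₂ x₃ x₄ →ₗ[F2] QB s₂ p₁ p₂ x₂ x₃ x₄)) = range jk := by
  apply le_antisymm
  · rintro c ⟨a, ha, rfl⟩
    have h4 : a.2.2.2.1 = 0 := congrArg (fun b => b.2.2.2.1) ha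
    have h6 : a.2.2.2.2.2 = 0 := by
      have := congrArg (fun b => b.2.2.2.2.2) ha
      funext m
      exact congrArg Prod.fst (congrFun this m)
    exact ⟨(a.2.2.1, a.2.2.2.2.1), by
      show (0, 0, a.2.2.1, 0, a.2.2.2.2.1, 0) = sQ a
      simp only [sQ, LinearMap.coe_mk, AddHom.coe_mk, h4, h6]⟩
  · rintro c ⟨⟨u, v⟩, rfl⟩
    refine ⟨(0, 0, u, 0, v, 0), ?_, rfl⟩
    show fQ ((0, 0, u, 0, v, 0) : QA s₁ p₁ x₁ x₂ x₃ x₄) = 0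
    rfl

lemma inf_gQ_sQ :
    range (gQ : QB s₂ p₁ p₂ x₂ x₃ x₄ →ₗ[F2] QC s₃ p₂ x₁ x₂ x₃ x₄) ⊓
      range (sQ : QA s₁ p₁ x₁ x₂ x₃ x₄ →ₗ[F2] QC s₃ p₂ x₁ x₂ x₃ x₄) = range jgs := by
  apply le_antisymm
  · rintro c ⟨⟨b, hb⟩, a, ha⟩
    have h1 : c.1 = 0 := by rw [← hb]; rfl
    have h2 : c.2.1 = 0 := by rw [← ha]; rfl
    have h3 : c.2.2.1 = 0 := by rw [← hb]; rfl
    have h4 : c.2.2.2.1 = 0 := by rw [← hb]; rfl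
    refine ⟨(c.2.2.2.2.1, c.2.2.2.2.2), ?_⟩
    show ((0, 0, 0, 0, c.2.2.2.2.1, c.2.2.2.2.2) : QC s₃ p₂ x₁ x₂ x₃ x₄) = c
    exact Prod.ext h1.symm (Prod.ext h2.symm (Prod.ext h3.symm (Prod.ext h4.symm rfl)))
  · rintro c ⟨⟨v, w⟩, rfl⟩
    refine ⟨⟨(0, 0, 0, 0, v, fun m => (0, w m)), rfl⟩, ⟨(0, 0, 0, 0, v, w), rfl⟩⟩

lemma inf_gQ_ker :
    range (gQ : QB s₂ p₁ p₂ x₂ x₃ x₄ →ₗ[F2] QC s₃ p₂ x₁ x₂ x₃ x₄) ⊓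
      Submodule.map (sQ : QA s₁ p₁ x₁ x₂ x₃ x₄ →ₗ[F2] QC s₃ p₂ x₁ x₂ x₃ x₄)
        (ker (fQ : QA s₁ p₁ x₁ x₂ x₃ x₄ →ₗ[F2] QB s₂ p₁ p₂ x₂ x₃ x₄)) = range jgk := by
  rw [map_sQ_ker_fQ]
  apply le_antisymm
  · rintro c ⟨⟨b, hb⟩, ⟨u, v⟩, hk⟩
    have h1 : c.1 = 0 := by rw [← hb]; rfl
    have h2 : c.2.1 = 0 := by rw [← hk]; rfl
    have h3 : c.2.2.1 = 0 := by rw [← hb]; rfl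
    have h4 : c.2.2.2.1 = 0 := by rw [← hb]; rfl
    have h6 : c.2.2.2.2.2 = 0 := by rw [← hk]; rfl
    refine ⟨c.2.2.2.2.1, ?_⟩
    show ((0, 0, 0, 0, c.2.2.2.2.1, 0) : QC s₃ p₂ x₁ x₂ x₃ x₄) = c
    exact Prod.ext h1.symm (Prod.ext h2.symm (Prod.ext h3.symm
      (Prod.ext h4.symm (Prod.ext rfl h6.symm))))
  · rintro c ⟨v, rfl⟩
    exact ⟨⟨(0, 0, 0, 0, v, 0), rfl⟩, ⟨(0, v), rfl⟩⟩

/-! ### Dimension computations in the model -/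

lemma finrank_QA : finrank F2 (QA s₁ p₁ x₁ x₂ x₃ x₄) = s₁ + p₁ + x₁ + x₂ + x₃ + x₄ := by
  simp [Module.finrank_prod, Module.finrank_fin_fun]
  ring

lemma finrank_QB : finrank F2 (QB s₂ p₁ p₂ x₂ x₃ x₄) = s₂ + p₁ + p₂ + x₂ + x₃ + 2 * x₄ := by
  simp [Module.finrank_prod, Module.finrank_fin_fun, Module.finrank_pi_fintype,
    Finset.sum_const, Module.finrank_self]
  ring

lemma finrank_QC : finrank F2 (QC s₃ p₂ x₁ x₂ x₃ x₄) = s₃ + p₂ + x₁ + x₂ + x₃ + x₄ := by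
  simp [Module.finrank_prod, Module.finrank_fin_fun]
  ring

lemma rank_fQ :
    finrank F2 (range (fQ : QA s₁ p₁ x₁ x₂ x₃ x₄ →ₗ[F2] QB s₂ p₁ p₂ x₂ x₃ x₄))
      = p₁ + x₂ + x₄ := by
  rw [range_fQ, LinearMap.finrank_range_of_inj jf_inj]
  simp [Module.finrank_prod, Module.finrank_fin_fun]
  ring

lemma rank_gQ :
    finrank F2 (range (gQ : QB s₂ p₁ p₂ x₂ x₃ x₄ →ₗ[F2] QC s₃ p₂ x₁ x₂ x₃ x₄))
      = p₂ + x₃ + x₄ := by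
  rw [range_gQ, LinearMap.finrank_range_of_inj jg_inj]
  simp [Module.finrank_prod, Module.finrank_fin_fun]
  ring

lemma rank_sQ :
    finrank F2 (range (sQ : QA s₁ p₁ x₁ x₂ x₃ x₄ →ₗ[F2] QC s₃ p₂ x₁ x₂ x₃ x₄))
      = x₁ + x₂ + x₃ + x₄ := by
  rw [range_sQ, LinearMap.finrank_range_of_inj js_inj]
  simp [Module.finrank_prod, Module.finrank_fin_fun]
  ring

lemma rank_ker :
    finrank F2 (Submodule.map (sQ : QA s₁ p₁ x₁ x₂ x₃ x₄ →ₗ[F2] QC s₃ p₂ x₁ x₂ x₃ x₄)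
      (ker (fQ : QA s₁ p₁ x₁ x₂ x₃ x₄ →ₗ[F2] QB s₂ p₁ p₂ x₂ x₃ x₄))) = x₁ + x₃ := by
  rw [map_sQ_ker_fQ, LinearMap.finrank_range_of_inj jk_inj]
  simp [Module.finrank_prod, Module.finrank_fin_fun]

lemma rank_gs :
    finrank F2 ↥(range (gQ : QB s₂ p₁ p₂ x₂ x₃ x₄ →ₗ[F2] QC s₃ p₂ x₁ x₂ x₃ x₄) ⊓
      range (sQ : QA s₁ p₁ x₁ x₂ x₃ x₄ →ₗ[F2] QC s₃ p₂ x₁ x₂ x₃ x₄)) = x₃ + x₄ := by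
  rw [inf_gQ_sQ, LinearMap.finrank_range_of_inj jgs_inj]
  simp [Module.finrank_prod, Module.finrank_fin_fun]

lemma rank_gk :
    finrank F2 ↥(range (gQ : QB s₂ p₁ p₂ x₂ x₃ x₄ →ₗ[F2] QC s₃ p₂ x₁ x₂ x₃ x₄) ⊓
      Submodule.map (sQ : QA s₁ p₁ x₁ x₂ x₃ x₄ →ₗ[F2] QC s₃ p₂ x₁ x₂ x₃ x₄)
        (ker (fQ : QA s₁ p₁ x₁ x₂ x₃ x₄ →ₗ[F2] QB s₂ p₁ p₂ x₂ x₃ x₄))) = x₃ := by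
  rw [inf_gQ_ker, LinearMap.finrank_range_of_inj jgk_inj]
  simp [Module.finrank_fin_fun]

end QuiverAux


/-- If the quiver `(A, B, C, f, g, s)` over `F₂` (with `g ∘ f = 0`) decomposes into the
nine indecomposable quivers with multiplicities `(s₁, s₂, s₃, p₁, p₂, x₁, x₂, x₃, x₄)`,
then the multiplicities are determined by the nine pieces of linear-algebra data
`d₁ = dim A`, `d₂ = dim B`, `d₃ = dim C`, `r_f = rank f`, `r_g = rank g`,
`r₁ = dim im s`, `r₂ = dim im (s ∘ ι)` (`ι : ker f → A` the inclusion),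
`r₃ = dim (im g ∩ im s)`, `r₄ = dim (im g ∩ im (s ∘ ι))` via the stated equations. -/
theorem quiver_decomposition_multiplicities
    (A B C : Type) [AddCommGroup A] [Module F2 A] [FiniteDimensional F2 A]
    [AddCommGroup B] [Module F2 B] [FiniteDimensional F2 B]
    [AddCommGroup C] [Module F2 C] [FiniteDimensional F2 C]
    (f : A →ₗ[F2] B) (g : B →ₗ[F2] C) (s : A →ₗ[F2] C)
    (hgf : g ∘ₗ f = 0)
    (s₁ s₂ s₃ p₁ p₂ x₁ x₂ x₃ x₄ : ℕ)
    (hdec : IsQuiverDecomposition A B C f g s s₁ s₂ s₃ p₁ p₂ x₁ x₂ x₃ x₄) :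
    s₁ + finrank F2 (range f) + finrank F2 (range (s ∘ₗ (ker f).subtype))
        = finrank F2 A ∧
    s₂ + finrank F2 (range f) + finrank F2 (range g) = finrank F2 B ∧
    s₃ + finrank F2 (range g) + finrank F2 (range s)
        = finrank F2 C + finrank F2 ↥(range g ⊓ range s) ∧
    p₁ + finrank F2 (range s)
        = finrank F2 (range f) + finrank F2 (range (s ∘ₗ (ker f).subtype)) ∧
    p₂ + finrank F2 ↥(range g ⊓ range s) = finrank F2 (range g) ∧
    x₁ + finrank F2 ↥(range g ⊓ range (s ∘ₗ (ker f).subtype))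
        = finrank F2 (range (s ∘ₗ (ker f).subtype)) ∧
    x₂ + finrank F2 (range (s ∘ₗ (ker f).subtype)) + finrank F2 ↥(range g ⊓ range s)
        = finrank F2 (range s) + finrank F2 ↥(range g ⊓ range (s ∘ₗ (ker f).subtype)) ∧
    x₃ = finrank F2 ↥(range g ⊓ range (s ∘ₗ (ker f).subtype)) ∧
    x₄ + finrank F2 ↥(range g ⊓ range (s ∘ₗ (ker f).subtype))
        = finrank F2 ↥(range g ⊓ range s) := by
  
  obtain ⟨α, β, γ, hf, hg, hs⟩ := hdec
  have hcomm_f : (β : B →ₗ[F2] QB s₂ p₁ p₂ x₂ x₃ x₄) ∘ₗ f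
      = fQ ∘ₗ (α : A →ₗ[F2] QA s₁ p₁ x₁ x₂ x₃ x₄) := LinearMap.ext hf
  have hcomm_g : (γ : C →ₗ[F2] QC s₃ p₂ x₁ x₂ x₃ x₄) ∘ₗ g
      = gQ ∘ₗ (β : B →ₗ[F2] QB s₂ p₁ p₂ x₂ x₃ x₄) := LinearMap.ext hg
  have hcomm_s : (γ : C →ₗ[F2] QC s₃ p₂ x₁ x₂ x₃ x₄) ∘ₗ s
      = sQ ∘ₗ (α : A →ₗ[F2] QA s₁ p₁ x₁ x₂ x₃ x₄) := LinearMap.ext hs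
  have hrange_f : Submodule.map (β : B →ₗ[F2] QB s₂ p₁ p₂ x₂ x₃ x₄) (range f)
      = range (fQ : QA s₁ p₁ x₁ x₂ x₃ x₄ →ₗ[F2] QB s₂ p₁ p₂ x₂ x₃ x₄) := by
    rw [← LinearMap.range_comp, hcomm_f, LinearMap.range_comp, LinearEquiv.range,
      Submodule.map_top]
  have hrange_g : Submodule.map (γ : C →ₗ[F2] QC s₃ p₂ x₁ x₂ x₃ x₄) (range g)
      = range (gQ : QB s₂ p₁ p₂ x₂ x₃ x₄ →ₗ[F2] QC s₃ p₂ x₁ x₂ x₃ x₄) := by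
    rw [← LinearMap.range_comp, hcomm_g, LinearMap.range_comp, LinearEquiv.range,
      Submodule.map_top]
  have hrange_s : Submodule.map (γ : C →ₗ[F2] QC s₃ p₂ x₁ x₂ x₃ x₄) (range s)
      = range (sQ : QA s₁ p₁ x₁ x₂ x₃ x₄ →ₗ[F2] QC s₃ p₂ x₁ x₂ x₃ x₄) := by
    rw [← LinearMap.range_comp, hcomm_s, LinearMap.range_comp, LinearEquiv.range,
      Submodule.map_top]
  have hker : Submodule.map (α : A →ₗ[F2] QA s₁ p₁ x₁ x₂ x₃ x₄) (ker f)
      = ker (fQ : QA s₁ p₁ x₁ x₂ x₃ x₄ →ₗ[F2] QB s₂ p₁ p₂ x₂ x₃ x₄) := by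
    apply le_antisymm
    · rintro _ ⟨a, ha, rfl⟩
      show fQ (α a) = 0
      rw [← hf a, LinearMap.mem_ker.mp ha, map_zero]
    · intro a' ha'
      obtain ⟨a, rfl⟩ := α.surjective a'
      refine ⟨a, ?_, rfl⟩
      have : β (f a) = β 0 := by
        rw [hf a, map_zero]
        exact LinearMap.mem_ker.mp ha'
      exact LinearMap.mem_ker.mpr (β.injective this)
  have hsub : range (s ∘ₗ (ker f).subtype) = Submodule.map s (ker f) := by
    rw [LinearMap.range_comp, Submodule.range_subtype]
  have hmapk : Submodule.map (γ : C →ₗ[F2] QC s₃ p₂ x₁ x₂ x₃ x₄)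
      (range (s ∘ₗ (ker f).subtype))
      = Submodule.map (sQ : QA s₁ p₁ x₁ x₂ x₃ x₄ →ₗ[F2] QC s₃ p₂ x₁ x₂ x₃ x₄)
        (ker (fQ : QA s₁ p₁ x₁ x₂ x₃ x₄ →ₗ[F2] QB s₂ p₁ p₂ x₂ x₃ x₄)) := by
    rw [hsub, ← Submodule.map_comp, hcomm_s, Submodule.map_comp, hker]
  have hd1 : finrank F2 A = s₁ + p₁ + x₁ + x₂ + x₃ + x₄ := by
    rw [α.finrank_eq, QuiverAux.finrank_QA]
  have hd2 : finrank F2 B = s₂ + p₁ + p₂ + x₂ + x₃ + 2 * x₄ := by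
    rw [β.finrank_eq, QuiverAux.finrank_QB]
  have hd3 : finrank F2 C = s₃ + p₂ + x₁ + x₂ + x₃ + x₄ := by
    rw [γ.finrank_eq, QuiverAux.finrank_QC]
  have hrf : finrank F2 (range f) = p₁ + x₂ + x₄ := by
    rw [← β.finrank_map_eq (range f), hrange_f, QuiverAux.rank_fQ]
  have hrg : finrank F2 (range g) = p₂ + x₃ + x₄ := by
    rw [← γ.finrank_map_eq (range g), hrange_g, QuiverAux.rank_gQ]
  have hr1 : finrank F2 (range s) = x₁ + x₂ + x₃ + x₄ := by
    rw [← γ.finrank_map_eq (range s), hrange_s, QuiverAux.rank_sQ]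
  have hr2 : finrank F2 (range (s ∘ₗ (ker f).subtype)) = x₁ + x₃ := by
    rw [← γ.finrank_map_eq (range (s ∘ₗ (ker f).subtype)), hmapk, QuiverAux.rank_ker]
  have hr3 : finrank F2 ↥(range g ⊓ range s) = x₃ + x₄ := by
    rw [← γ.finrank_map_eq (range g ⊓ range s),
      Submodule.map_inf (γ : C →ₗ[F2] QC s₃ p₂ x₁ x₂ x₃ x₄) γ.injective, hrange_g, hrange_s, QuiverAux.rank_gs]
  have hr4 : finrank F2 ↥(range g ⊓ range (s ∘ₗ (ker f).subtype)) = x₃ := by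
    rw [← γ.finrank_map_eq (range g ⊓ range (s ∘ₗ (ker f).subtype)),
      Submodule.map_inf (γ : C →ₗ[F2] QC s₃ p₂ x₁ x₂ x₃ x₄) γ.injective, hrange_g, hmapk, QuiverAux.rank_gk]
  refine ⟨?_, ?_, ?_, ?_, ?_, ?_, ?_, ?_, ?_⟩ <;>
    simp only [hd1, hd2, hd3, hrf, hrg, hr1, hr2, hr3, hr4] <;> omega
end

section
/- Decomposition into the nine indecomposable quivers is unique: let A, B, C be finite-dimensional vector spaces over F₂ = ZMod 2 and f : A →ₗ B, g : B →ₗ C, s : A →ₗ C linear maps with g ∘ f = 0. If the quiver (A, B, C, f, g, s) is isomorphic both to the direct sum of the nine indecomposable quivers with multiplicities (s₁, s₂, s₃, p₁, p₂, x₁, x₂, x₃, x₄) ∈ ℕ⁹ and to the direct sum with multiplicities (s₁′, s₂′, s₃′, p₁′, p₂′, x₁′, x₂′, x₃′, x₄′) ∈ ℕ⁹, then the two tuples of multiplicities are equal. -/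
/-! The dimensions of `A`, `B`, `C` and the ranks of `f`, `g`, `s`, of `(f, s) : A → B × C`,
of `[g s] : B × A → C` and of `(a, b) ↦ (s a + g b, f a)` are invariant under isomorphism of
quivers. On the model direct sum each of them is a linear combination of the multiplicities,
and the resulting system can be solved successively for `p₁, p₂, x₄, x₂, x₃, x₁, s₁, s₂, s₃`. -/

open Module LinearMap

section RangeRank

variable {K D D' P R R' : Type*} [Ring K] [AddCommGroup D] [Module K D]
  [AddCommGroup D'] [Module K D'] [AddCommGroup P] [Module K P]
  [AddCommGroup R] [Module K R] [AddCommGroup R'] [Module K R']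

theorem finrank_range_eq_of_conj (M : D →ₗ[K] R) (M' : D' →ₗ[K] R')
    (e : D ≃ₗ[K] D') (ε : R ≃ₗ[K] R') (h : ∀ d, ε (M d) = M' (e d)) :
    finrank K (range M) = finrank K (range M') := by
  have hM' : M' = ((ε : R →ₗ[K] R') ∘ₗ M) ∘ₗ (e.symm : D' →ₗ[K] D) := by
    ext d'
    simpa using (h (e.symm d')).symm
  rw [hM', LinearEquiv.range_comp, range_comp, LinearEquiv.finrank_map_eq]

theorem finrank_range_eq_of_parametrization (M : D →ₗ[K] R) (ι : P →ₗ[K] R)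
    (π : D → P) (hπ : ∀ d, M d = ι (π d)) (σ : P → D) (hσ : ∀ q, M (σ q) = ι q)
    (ρ : R → P) (hρ : ∀ q, ρ (ι q) = q) :
    finrank K (range M) = finrank K P := by
  have hrange : range M = range ι :=
    le_antisymm (fun _ ⟨d, hd⟩ => ⟨π d, hd ▸ (hπ d).symm⟩)
      (fun _ ⟨q, hq⟩ => ⟨σ q, hq ▸ hσ q⟩)
  rw [hrange, finrank_range_of_inj (Function.LeftInverse.injective hρ)]

end RangeRank

/-- The rank of `mixMap f g s` is `2` on (X-4) and at most `1` on the other indecomposables,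
while `f`, `g`, `s`, `(f, s)` and `[g s]` all have rank `1` on (X-4): this is the invariant
that detects `x₄`. -/
def mixMap {K A B C : Type*} [Semiring K] [AddCommMonoid A] [Module K A] [AddCommMonoid B]
    [Module K B] [AddCommMonoid C] [Module K C]
    (f : A →ₗ[K] B) (g : B →ₗ[K] C) (s : A →ₗ[K] C) : A × B →ₗ[K] C × B :=
  (s.coprod g).prod (f ∘ₗ fst K A B)

section Model

variable {s₁ s₂ s₃ p₁ p₂ x₁ x₂ x₃ x₄ : ℕ}

local notation "𝒜" => QA s₁ p₁ x₁ x₂ x₃ x₄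
local notation "ℬ" => QB s₂ p₁ p₂ x₂ x₃ x₄
local notation "𝒞" => QC s₃ p₂ x₁ x₂ x₃ x₄

theorem finrank_QA : finrank F2 𝒜 = s₁ + p₁ + x₁ + x₂ + x₃ + x₄ := by
  simp only [finrank_prod, finrank_fin_fun]
  ring

theorem finrank_QB : finrank F2 ℬ = s₂ + p₁ + p₂ + x₂ + x₃ + 2 * x₄ := by
  simp only [finrank_prod, finrank_pi_fintype, finrank_self, Finset.sum_const, Finset.card_univ,
    Fintype.card_fin, smul_eq_mul]
  ring

theorem finrank_QC : finrank F2 𝒞 = s₃ + p₂ + x₁ + x₂ + x₃ + x₄ := by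
  simp only [finrank_prod, finrank_fin_fun]
  ring

def inclF : (Fin p₁ → F2) × (Fin x₂ → F2) × (Fin x₄ → F2) →ₗ[F2] ℬ where
  toFun q := (0, q.1, 0, q.2.1, 0, fun m => (q.2.2 m, 0))
  map_add' a b := by ext <;> simp
  map_smul' c a := by ext <;> simp

theorem finrank_range_fQ : finrank F2 (range (fQ : 𝒜 →ₗ[F2] ℬ)) = p₁ + x₂ + x₄ := by
  rw [finrank_range_eq_of_parametrization _ inclF
    (fun a => (a.2.1, a.2.2.2.1, a.2.2.2.2.2)) ?_
    (fun q => (0, q.1, 0, q.2.1, 0, q.2.2)) ?_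
    (fun b => (b.2.1, b.2.2.2.1, fun m => (b.2.2.2.2.2 m).1)) ?_]
  · simp only [finrank_prod, finrank_fin_fun]
    ring
  all_goals exact fun _ => rfl

def inclG : (Fin p₂ → F2) × (Fin x₃ → F2) × (Fin x₄ → F2) →ₗ[F2] 𝒞 where
  toFun q := (0, q.1, 0, 0, q.2.1, q.2.2)
  map_add' a b := by ext <;> simp
  map_smul' c a := by ext <;> simp

theorem finrank_range_gQ : finrank F2 (range (gQ : ℬ →ₗ[F2] 𝒞)) = p₂ + x₃ + x₄ := by
  rw [finrank_range_eq_of_parametrization _ inclG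
    (fun b => (b.2.2.1, b.2.2.2.2.1, fun m => (b.2.2.2.2.2 m).2)) ?_
    (fun q => (0, 0, q.1, 0, q.2.1, fun m => (0, q.2.2 m))) ?_
    (fun c => (c.2.1, c.2.2.2.2.1, c.2.2.2.2.2)) ?_]
  · simp only [finrank_prod, finrank_fin_fun]
    ring
  all_goals exact fun _ => rfl

def inclS : (Fin x₁ → F2) × (Fin x₂ → F2) × (Fin x₃ → F2) × (Fin x₄ → F2) →ₗ[F2] 𝒞 where
  toFun q := (0, 0, q.1, q.2.1, q.2.2.1, q.2.2.2)
  map_add' a b := by ext <;> simp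
  map_smul' c a := by ext <;> simp

theorem finrank_range_sQ : finrank F2 (range (sQ : 𝒜 →ₗ[F2] 𝒞)) = x₁ + x₂ + x₃ + x₄ := by
  rw [finrank_range_eq_of_parametrization _ inclS
    (fun a => (a.2.2.1, a.2.2.2.1, a.2.2.2.2.1, a.2.2.2.2.2)) ?_
    (fun q => (0, 0, q.1, q.2.1, q.2.2.1, q.2.2.2)) ?_
    (fun c => (c.2.2.1, c.2.2.2.1, c.2.2.2.2.1, c.2.2.2.2.2)) ?_]
  · simp only [finrank_prod, finrank_fin_fun]
    ring
  all_goals exact fun _ => rfl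

def inclFS : (Fin p₁ → F2) × (Fin x₁ → F2) × (Fin x₂ → F2) × (Fin x₃ → F2) × (Fin x₄ → F2)
    →ₗ[F2] ℬ × 𝒞 where
  toFun q := ((0, q.1, 0, q.2.2.1, 0, fun m => (q.2.2.2.2 m, 0)),
    (0, 0, q.2.1, q.2.2.1, q.2.2.2.1, q.2.2.2.2))
  map_add' a b := by ext <;> simp
  map_smul' c a := by ext <;> simp

theorem finrank_range_fQ_prod_sQ :
    finrank F2 (range ((fQ : 𝒜 →ₗ[F2] ℬ).prod (sQ : 𝒜 →ₗ[F2] 𝒞))) =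
      p₁ + x₁ + x₂ + x₃ + x₄ := by
  rw [finrank_range_eq_of_parametrization _ inclFS
    (fun a => (a.2.1, a.2.2.1, a.2.2.2.1, a.2.2.2.2.1, a.2.2.2.2.2)) ?_
    (fun q => (0, q.1, q.2.1, q.2.2.1, q.2.2.2.1, q.2.2.2.2)) ?_
    (fun c => (c.1.2.1, c.2.2.2.1, c.2.2.2.2.1, c.2.2.2.2.2.1, c.2.2.2.2.2.2)) ?_]
  · simp only [finrank_prod, finrank_fin_fun]
    ring
  all_goals exact fun _ => rfl

def inclGS : (Fin p₂ → F2) × (Fin x₁ → F2) × (Fin x₂ → F2) × (Fin x₃ → F2) × (Fin x₄ → F2)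
    →ₗ[F2] 𝒞 where
  toFun q := (0, q.1, q.2.1, q.2.2.1, q.2.2.2.1, q.2.2.2.2)
  map_add' a b := by ext <;> simp
  map_smul' c a := by ext <;> simp

theorem finrank_range_gQ_coprod_sQ :
    finrank F2 (range ((gQ : ℬ →ₗ[F2] 𝒞).coprod (sQ : 𝒜 →ₗ[F2] 𝒞))) =
      p₂ + x₁ + x₂ + x₃ + x₄ := by
  rw [finrank_range_eq_of_parametrization _ inclGS
    (fun (d : ℬ × 𝒜) => (d.1.2.2.1, d.2.2.2.1, d.2.2.2.2.1, d.1.2.2.2.2.1 + d.2.2.2.2.2.1,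
      fun m => (d.1.2.2.2.2.2 m).2 + d.2.2.2.2.2.2 m)) ?_
    (fun q => ((0, 0, q.1, 0, q.2.2.2.1, fun m => (0, q.2.2.2.2 m)),
      (0, 0, q.2.1, q.2.2.1, 0, 0))) ?_
    (fun c => (c.2.1, c.2.2.1, c.2.2.2.1, c.2.2.2.2.1, c.2.2.2.2.2)) (fun _ => rfl)]
  · simp only [finrank_prod, finrank_fin_fun]
    ring
  all_goals intro; ext <;> simp [gQ, sQ, inclGS]

def inclMix : (Fin p₁ → F2) × (Fin p₂ → F2) × (Fin x₁ → F2) × (Fin x₂ → F2) × (Fin x₃ → F2) ×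
      (Fin x₄ → F2) × (Fin x₄ → F2)
    →ₗ[F2] 𝒞 × ℬ where
  toFun q := ((0, q.2.1, q.2.2.1, q.2.2.2.1, q.2.2.2.2.1, q.2.2.2.2.2.2),
    (0, q.1, 0, q.2.2.2.1, 0, fun m => (q.2.2.2.2.2.1 m, 0)))
  map_add' a b := by ext <;> simp
  map_smul' c a := by ext <;> simp

theorem finrank_range_mixMap_model :
    finrank F2 (range (mixMap (fQ : 𝒜 →ₗ[F2] ℬ) (gQ : ℬ →ₗ[F2] 𝒞) sQ)) =
      p₁ + p₂ + x₁ + x₂ + x₃ + 2 * x₄ := by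
  rw [finrank_range_eq_of_parametrization _ inclMix
    (fun (d : 𝒜 × ℬ) => (d.1.2.1, d.2.2.2.1, d.1.2.2.1, d.1.2.2.2.1,
      d.1.2.2.2.2.1 + d.2.2.2.2.2.1, d.1.2.2.2.2.2, fun m => d.1.2.2.2.2.2 m + (d.2.2.2.2.2.2 m).2))
    ?_
    (fun q => ((0, q.1, q.2.2.1, q.2.2.2.1, 0, q.2.2.2.2.2.1),
      (0, 0, q.2.1, 0, q.2.2.2.2.1, fun m => (0, q.2.2.2.2.2.2 m - q.2.2.2.2.2.1 m)))) ?_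
    (fun c => (c.2.2.1, c.1.2.1, c.1.2.2.1, c.1.2.2.2.1, c.1.2.2.2.2.1,
      fun m => (c.2.2.2.2.2.2 m).1, c.1.2.2.2.2.2)) (fun _ => rfl)]
  · simp only [finrank_prod, finrank_fin_fun]
    ring
  all_goals intro; ext <;> simp [mixMap, fQ, gQ, sQ, inclMix]

end Model

theorem IsQuiverDecomposition.finrank_eqs {A B C : Type} [AddCommGroup A] [Module F2 A]
    [AddCommGroup B] [Module F2 B] [AddCommGroup C] [Module F2 C]
    {f : A →ₗ[F2] B} {g : B →ₗ[F2] C} {s : A →ₗ[F2] C} {s₁ s₂ s₃ p₁ p₂ x₁ x₂ x₃ x₄ : ℕ}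
    (h : IsQuiverDecomposition A B C f g s s₁ s₂ s₃ p₁ p₂ x₁ x₂ x₃ x₄) :
    finrank F2 A = s₁ + p₁ + x₁ + x₂ + x₃ + x₄ ∧
    finrank F2 B = s₂ + p₁ + p₂ + x₂ + x₃ + 2 * x₄ ∧
    finrank F2 C = s₃ + p₂ + x₁ + x₂ + x₃ + x₄ ∧
    finrank F2 (range f) = p₁ + x₂ + x₄ ∧
    finrank F2 (range g) = p₂ + x₃ + x₄ ∧
    finrank F2 (range s) = x₁ + x₂ + x₃ + x₄ ∧
    finrank F2 (range (f.prod s)) = p₁ + x₁ + x₂ + x₃ + x₄ ∧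
    finrank F2 (range (g.coprod s)) = p₂ + x₁ + x₂ + x₃ + x₄ ∧
    finrank F2 (range (mixMap f g s)) = p₁ + p₂ + x₁ + x₂ + x₃ + 2 * x₄ := by
  obtain ⟨α, β, γ, hf, hg, hs⟩ := h
  refine ⟨?_, ?_, ?_, ?_, ?_, ?_, ?_, ?_, ?_⟩
  · rw [α.finrank_eq, finrank_QA]
  · rw [β.finrank_eq, finrank_QB]
  · rw [γ.finrank_eq, finrank_QC]
  · rw [finrank_range_eq_of_conj f fQ α β hf, finrank_range_fQ]
  · rw [finrank_range_eq_of_conj g gQ β γ hg, finrank_range_gQ]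
  · rw [finrank_range_eq_of_conj s sQ α γ hs, finrank_range_sQ]
  · rw [finrank_range_eq_of_conj (f.prod s) (fQ.prod sQ) α (β.prodCongr γ)
      (fun a => Prod.ext (hf a) (hs a)), finrank_range_fQ_prod_sQ]
  · rw [finrank_range_eq_of_conj (g.coprod s) (gQ.coprod sQ) (β.prodCongr α) γ
      (fun d => (map_add γ _ _).trans (congrArg₂ (· + ·) (hg d.1) (hs d.2))),
      finrank_range_gQ_coprod_sQ]
  · rw [finrank_range_eq_of_conj (mixMap f g s) (mixMap fQ gQ sQ) (α.prodCongr β)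
      (γ.prodCongr β)
      (fun d => Prod.ext ((map_add γ _ _).trans (congrArg₂ (· + ·) (hs d.1) (hg d.2))) (hf d.1)),
      finrank_range_mixMap_model]

theorem quiver_decomposition_unique_general
    (A B C : Type) [AddCommGroup A] [Module F2 A]
    [AddCommGroup B] [Module F2 B]
    [AddCommGroup C] [Module F2 C]
    (f : A →ₗ[F2] B) (g : B →ₗ[F2] C) (s : A →ₗ[F2] C)
    (s₁ s₂ s₃ p₁ p₂ x₁ x₂ x₃ x₄ s₁' s₂' s₃' p₁' p₂' x₁' x₂' x₃' x₄' : ℕ)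
    (h : IsQuiverDecomposition A B C f g s s₁ s₂ s₃ p₁ p₂ x₁ x₂ x₃ x₄)
    (h' : IsQuiverDecomposition A B C f g s s₁' s₂' s₃' p₁' p₂' x₁' x₂' x₃' x₄') :
    s₁ = s₁' ∧ s₂ = s₂' ∧ s₃ = s₃' ∧ p₁ = p₁' ∧ p₂ = p₂' ∧
      x₁ = x₁' ∧ x₂ = x₂' ∧ x₃ = x₃' ∧ x₄ = x₄' := by
  obtain ⟨hA, hB, hC, hf, hg, hs, hfs, hgs, hmix⟩ := h.finrank_eqs
  obtain ⟨hA', hB', hC', hf', hg', hs', hfs', hgs', hmix'⟩ := h'.finrank_eqs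
  omega

/-- Uniqueness of the decomposition of a quiver over `F₂` (with `g ∘ f = 0`) into the nine
indecomposable quivers: the multiplicities of the indecomposable summands are uniquely
determined. -/
theorem quiver_decomposition_unique
    (A B C : Type) [AddCommGroup A] [Module F2 A] [FiniteDimensional F2 A]
    [AddCommGroup B] [Module F2 B] [FiniteDimensional F2 B]
    [AddCommGroup C] [Module F2 C] [FiniteDimensional F2 C]
    (f : A →ₗ[F2] B) (g : B →ₗ[F2] C) (s : A →ₗ[F2] C)
    (hgf : g ∘ₗ f = 0)
    (s₁ s₂ s₃ p₁ p₂ x₁ x₂ x₃ x₄ s₁' s₂' s₃' p₁' p₂' x₁' x₂' x₃' x₄' : ℕ)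
    (h : IsQuiverDecomposition A B C f g s s₁ s₂ s₃ p₁ p₂ x₁ x₂ x₃ x₄)
    (h' : IsQuiverDecomposition A B C f g s s₁' s₂' s₃' p₁' p₂' x₁' x₂' x₃' x₄') :
    s₁ = s₁' ∧ s₂ = s₂' ∧ s₃ = s₃' ∧ p₁ = p₁' ∧ p₂ = p₂' ∧
      x₁ = x₁' ∧ x₂ = x₂' ∧ x₃ = x₃' ∧ x₄ = x₄' :=
  quiver_decomposition_unique_general A B C f g s s₁ s₂ s₃ p₁ p₂ x₁ x₂ x₃ x₄ s₁' s₂' s₃' p₁' p₂' x₁'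
    x₂' x₃' x₄' h h'
end

section
/- Let A, B, C be finite-dimensional vector spaces over F₂ = ZMod 2 and f : A →ₗ B, g : B →ₗ C, s : A →ₗ C linear maps with g ∘ f = 0. Let ι : ker f → A denote the inclusion of the kernel of f. Then dim(im s) + dim(im g ∩ im(s ∘ ι)) ≥ dim(im(s ∘ ι)) + dim(im g ∩ im s). (This is the nonnegativity of the multiplicity x₂ = r₁ − r₂ − r₃ + r₄ in the decomposition of the quiver (A, B, C, f, g, s) into indecomposables.) -/
open Module LinearMap

/-- For a quiver `(A, B, C, f, g, s)` over `F₂` with `g ∘ f = 0`, the multiplicity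
`x₂ = r₁ − r₂ − r₃ + r₄` is nonnegative:
`dim(im s) + dim(im g ∩ im(s ∘ ι)) ≥ dim(im(s ∘ ι)) + dim(im g ∩ im s)`,
where `ι : ker f → A` is the inclusion. -/
theorem rank_ineq_x2_nonneg
    (A B C : Type) [AddCommGroup A] [Module (ZMod 2) A] [FiniteDimensional (ZMod 2) A]
    [AddCommGroup B] [Module (ZMod 2) B] [FiniteDimensional (ZMod 2) B]
    [AddCommGroup C] [Module (ZMod 2) C] [FiniteDimensional (ZMod 2) C]
    (f : A →ₗ[ZMod 2] B) (g : B →ₗ[ZMod 2] C) (s : A →ₗ[ZMod 2] C)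
    (hgf : g ∘ₗ f = 0) :
    finrank (ZMod 2) (range s)
        + finrank (ZMod 2) ↥(range g ⊓ range (s ∘ₗ (ker f).subtype))
      ≥ finrank (ZMod 2) (range (s ∘ₗ (ker f).subtype))
        + finrank (ZMod 2) ↥(range g ⊓ range s) := by
  set S' := range (s ∘ₗ (ker f).subtype) with hS'def
  set P := range g ⊓ range s with hPdef
  have hS' : S' ≤ range s := range_comp_le_range _ _
  have hinf : P ⊓ S' = range g ⊓ S' := by
    rw [hPdef, inf_assoc, inf_eq_right.mpr hS']
  have hsup : P ⊔ S' ≤ range s := sup_le inf_le_right hS'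
  have key := Submodule.finrank_sup_add_finrank_inf_eq P S'
  have h1 : finrank (ZMod 2) ↥(P ⊔ S') ≤ finrank (ZMod 2) (range s) :=
    Submodule.finrank_mono hsup
  rw [hinf] at key
  omega
end

section
/- The following explicit loop in SO(3) is null-homotopic (path-homotopic, relative to its endpoints, to the constant loop at the identity matrix, within the subspace SO(3) of 3×3 real matrices): the concatenation of the three paths of orthonormal 2-frames, each completed to an SO(3)-valued path by the rule (v₁, v₂) ↦ [v₁×v₂ | v₁ | v₂], given for t ∈ [0,1] by: (1) v₁(t) = cos(πt)·e₁ + sin(πt)·ē, v₂(t) = e₂, running from [e₁, e₂] to [−e₁, e₂]; (2) v₁(t) = −e₁, v₂(t) = cos(πt)·e₂ − sin(πt)·ē, running from [−e₁, e₂] to [−e₁, −e₂]; (3) v₁(t) = −cos(πt)·e₁ + sin(πt)·e₂, v₂(t) = −cos(πt)·e₂ − sin(πt)·e₁, running from [−e₁, −e₂] back to [e₁, e₂]. (This is the verification that the loop (⁺₊⁺₋)·(⁺₋⁻₋)·(⁻₋⁺₊) of the coherent system of frame paths is null-homotopic in SO(3).) -/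
noncomputable section

open Real

set_option linter.unnecessarySeqFocus false

/-- `SO(3)`: the special orthogonal group of 3×3 real matrices, topologized as a subspace
of the 3×3 matrices. -/
abbrev SO3 := {M : Matrix (Fin 3) (Fin 3) ℝ // M.transpose * M = 1 ∧ M.det = 1}

/-- The standard basis vector `ē = (1,0,0)` of `ℝ³`. -/
def eBar : Fin 3 → ℝ := ![1, 0, 0]

/-- The standard basis vector `e₁ = (0,1,0)` of `ℝ³`. -/
def eOne : Fin 3 → ℝ := ![0, 1, 0]

/-- The standard basis vector `e₂ = (0,0,1)` of `ℝ³`. -/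
def eTwo : Fin 3 → ℝ := ![0, 0, 1]

/-- The matrix `[v₁×v₂ | v₁ | v₂]` whose columns are `v₁×v₂`, `v₁`, `v₂`; for an
orthonormal pair `(v₁, v₂)` it lies in `SO(3)`. -/
def frameMatrix (v₁ v₂ : Fin 3 → ℝ) : Matrix (Fin 3) (Fin 3) ℝ :=
  Matrix.of fun i j => ![crossProduct v₁ v₂, v₁, v₂] j i

/-- The identity element of `SO(3)`; it is the matrix of the frame `[e₁, e₂]`. -/
def so3One : SO3 := ⟨1, by simp, by simp⟩

/-- The frame `[−e₁, e₂]` as an element of `SO(3)`. -/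
def so3MP : SO3 := ⟨frameMatrix (-eOne) eTwo, by
  refine ⟨?_, ?_⟩
  · ext i j
    fin_cases i <;> fin_cases j <;>
      simp [frameMatrix, cross_apply, eOne, eTwo, Matrix.mul_apply, Fin.sum_univ_three,
        Matrix.one_apply, Matrix.transpose_apply, Matrix.vecHead, Matrix.vecTail]
  · simp [frameMatrix, cross_apply, eOne, eTwo, Matrix.det_fin_three, Matrix.vecHead,
      Matrix.vecTail]⟩

/-- The frame `[−e₁, −e₂]` as an element of `SO(3)`. -/
def so3MM : SO3 := ⟨frameMatrix (-eOne) (-eTwo), by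
  refine ⟨?_, ?_⟩
  · ext i j
    fin_cases i <;> fin_cases j <;>
      simp [frameMatrix, cross_apply, eOne, eTwo, Matrix.mul_apply, Fin.sum_univ_three,
        Matrix.one_apply, Matrix.transpose_apply, Matrix.vecHead, Matrix.vecTail]
  · simp [frameMatrix, cross_apply, eOne, eTwo, Matrix.det_fin_three, Matrix.vecHead,
      Matrix.vecTail]⟩

/-- The frame path `(⁺₊⁺₋)`: `v₁(t) = cos(πt)·e₁ + sin(πt)·ē`, `v₂(t) = e₂`, running from
`[e₁, e₂]` (the identity) to `[−e₁, e₂]`; it rotates `180°` around the `e₂`-axis so that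
the first vector equals `ē` halfway through. -/
def pathA : Path so3One so3MP where
  toFun t := ⟨frameMatrix (fun i => cos (π * t) * eOne i + sin (π * t) * eBar i) eTwo, by
    have h := sin_sq_add_cos_sq (π * (t : ℝ))
    refine ⟨?_, ?_⟩
    · ext i j
      fin_cases i <;> fin_cases j <;>
        (simp [frameMatrix, cross_apply, eOne, eTwo, eBar, Matrix.mul_apply,
          Fin.sum_univ_three, Matrix.one_apply, Matrix.transpose_apply, Matrix.vecHead,
          Matrix.vecTail] <;> nlinarith [h])
    · simp [frameMatrix, cross_apply, eOne, eTwo, eBar, Matrix.det_fin_three,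
        Matrix.vecHead, Matrix.vecTail] <;> nlinarith [h]⟩
  continuous_toFun := by
    apply Continuous.subtype_mk
    apply continuous_matrix
    intro i j
    fin_cases i <;> fin_cases j <;>
      (simp [frameMatrix, cross_apply, eOne, eTwo, eBar, Matrix.vecHead, Matrix.vecTail] <;>
        fun_prop)
  source' := by
    apply Subtype.ext
    ext i j
    fin_cases i <;> fin_cases j <;>
      simp [frameMatrix, cross_apply, eOne, eTwo, eBar, so3One, Matrix.one_apply,
        Matrix.vecHead, Matrix.vecTail]
  target' := by
    apply Subtype.ext
    ext i j
    fin_cases i <;> fin_cases j <;>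
      simp [frameMatrix, cross_apply, eOne, eTwo, eBar, so3MP, Matrix.vecHead,
        Matrix.vecTail]

/-- The frame path `(⁺₋⁻₋)`: `v₁(t) = −e₁`, `v₂(t) = cos(πt)·e₂ − sin(πt)·ē`, running
from `[−e₁, e₂]` to `[−e₁, −e₂]`; it rotates `180°` around the `e₁`-axis so that the
second vector equals `−ē` halfway through. -/
def pathB : Path so3MP so3MM where
  toFun t := ⟨frameMatrix (-eOne) (fun i => cos (π * t) * eTwo i - sin (π * t) * eBar i), by
    have h := sin_sq_add_cos_sq (π * (t : ℝ))
    refine ⟨?_, ?_⟩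
    · ext i j
      fin_cases i <;> fin_cases j <;>
        (simp [frameMatrix, cross_apply, eOne, eTwo, eBar, Matrix.mul_apply,
          Fin.sum_univ_three, Matrix.one_apply, Matrix.transpose_apply, Matrix.vecHead,
          Matrix.vecTail] <;> nlinarith [h])
    · simp [frameMatrix, cross_apply, eOne, eTwo, eBar, Matrix.det_fin_three,
        Matrix.vecHead, Matrix.vecTail] <;> nlinarith [h]⟩
  continuous_toFun := by
    apply Continuous.subtype_mk
    apply continuous_matrix
    intro i j
    fin_cases i <;> fin_cases j <;>
      (simp [frameMatrix, cross_apply, eOne, eTwo, eBar, Matrix.vecHead, Matrix.vecTail] <;>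
        fun_prop)
  source' := by
    apply Subtype.ext
    ext i j
    fin_cases i <;> fin_cases j <;>
      simp [frameMatrix, cross_apply, eOne, eTwo, eBar, so3MP, Matrix.vecHead,
        Matrix.vecTail]
  target' := by
    apply Subtype.ext
    ext i j
    fin_cases i <;> fin_cases j <;>
      simp [frameMatrix, cross_apply, eOne, eTwo, eBar, so3MM, Matrix.vecHead,
        Matrix.vecTail]

/-- The frame path `(⁻₋⁺₊)`: `v₁(t) = −cos(πt)·e₁ + sin(πt)·e₂`,
`v₂(t) = −cos(πt)·e₂ − sin(πt)·e₁`, running from `[−e₁, −e₂]` back to `[e₁, e₂]`; it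
rotates `180°` around the `ē`-axis so that the second vector equals `−e₁` halfway
through. -/
def pathC : Path so3MM so3One where
  toFun t := ⟨frameMatrix (fun i => -cos (π * t) * eOne i + sin (π * t) * eTwo i)
      (fun i => -cos (π * t) * eTwo i - sin (π * t) * eOne i), by
    have h := sin_sq_add_cos_sq (π * (t : ℝ))
    refine ⟨?_, ?_⟩
    · ext i j
      fin_cases i <;> fin_cases j <;>
        (simp [frameMatrix, cross_apply, eOne, eTwo, eBar, Matrix.mul_apply,
          Fin.sum_univ_three, Matrix.one_apply, Matrix.transpose_apply, Matrix.vecHead,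
          Matrix.vecTail] <;> nlinarith [h])
    · simp [frameMatrix, cross_apply, eOne, eTwo, eBar, Matrix.det_fin_three,
        Matrix.vecHead, Matrix.vecTail] <;> nlinarith [h]⟩
  continuous_toFun := by
    apply Continuous.subtype_mk
    apply continuous_matrix
    intro i j
    fin_cases i <;> fin_cases j <;>
      (simp [frameMatrix, cross_apply, eOne, eTwo, eBar, Matrix.vecHead, Matrix.vecTail] <;>
        fun_prop)
  source' := by
    apply Subtype.ext
    ext i j
    fin_cases i <;> fin_cases j <;>
      simp [frameMatrix, cross_apply, eOne, eTwo, eBar, so3MM, Matrix.vecHead,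
        Matrix.vecTail]
  target' := by
    apply Subtype.ext
    ext i j
    fin_cases i <;> fin_cases j <;>
      simp [frameMatrix, cross_apply, eOne, eTwo, eBar, so3One, Matrix.one_apply,
        Matrix.vecHead, Matrix.vecTail]


set_option maxHeartbeats 1600000

def rotMat (w x y z : ℝ) : Matrix (Fin 3) (Fin 3) ℝ :=
  Matrix.of ![![(w^2+x^2-y^2-z^2)/(w^2+x^2+y^2+z^2), 2*(x*y-w*z)/(w^2+x^2+y^2+z^2), 2*(x*z+w*y)/(w^2+x^2+y^2+z^2)],
    ![2*(x*y+w*z)/(w^2+x^2+y^2+z^2), (w^2-x^2+y^2-z^2)/(w^2+x^2+y^2+z^2), 2*(y*z-w*x)/(w^2+x^2+y^2+z^2)],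
    ![2*(x*z-w*y)/(w^2+x^2+y^2+z^2), 2*(y*z+w*x)/(w^2+x^2+y^2+z^2), (w^2-x^2-y^2+z^2)/(w^2+x^2+y^2+z^2)]]

lemma rotMat_mem (w x y z : ℝ) (h : w^2+x^2+y^2+z^2 ≠ 0) :
    (rotMat w x y z).transpose * rotMat w x y z = 1 ∧ (rotMat w x y z).det = 1 := by
  constructor
  · ext i j
    fin_cases i <;> fin_cases j <;>
      (simp [rotMat, Matrix.mul_apply, Fin.sum_univ_three, Matrix.one_apply,
        Matrix.transpose_apply, Matrix.vecHead, Matrix.vecTail] <;> field_simp <;> ring)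
  · simp [rotMat, Matrix.det_fin_three, Matrix.vecHead, Matrix.vecTail, Fin.ext_iff]
    field_simp
    ring

lemma rotMat_one : rotMat 1 0 0 0 = 1 := by
  ext i j
  fin_cases i <;> fin_cases j <;>
    norm_num [rotMat, Matrix.one_apply, Matrix.vecHead, Matrix.vecTail, Fin.ext_iff]

def qw (t : ℝ) : ℝ := if t ≤ 1/4 then cos (2*π*t) else if t ≤ 1/2 then 0 else -cos (π*t)
def qx (t : ℝ) : ℝ := if t ≤ 1/4 then 0 else if t ≤ 1/2 then -cos (2*π*t) else sin (π*t)
def qz (t : ℝ) : ℝ := if t ≤ 1/2 then -sin (2*π*t) else 0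

@[fun_prop] lemma qw_cont : Continuous qw := by
  apply Continuous.if_le
  · fun_prop
  · apply Continuous.if_le (by fun_prop) (by fun_prop) (by fun_prop) (by fun_prop)
    intro x hx
    norm_num [hx]
    rw [show π*(1/2:ℝ) = π/2 by ring, cos_pi_div_two]
  · fun_prop
  · fun_prop
  · intro x hx
    norm_num [hx]
    rw [show 2*π*(1/4 : ℝ) = π/2 by ring, cos_pi_div_two]

@[fun_prop] lemma qx_cont : Continuous qx := by
  apply Continuous.if_le
  · fun_prop
  · apply Continuous.if_le (by fun_prop) (by fun_prop) (by fun_prop) (by fun_prop)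
    intro x hx
    norm_num [hx]
    rw [show 2*π*(1/2 : ℝ) = π by ring, show π*(1/2:ℝ) = π/2 by ring, cos_pi, sin_pi_div_two]
    norm_num
  · fun_prop
  · fun_prop
  · intro x hx
    norm_num [hx]
    rw [show 2*π*(1/4 : ℝ) = π/2 by ring, cos_pi_div_two]

@[fun_prop] lemma qz_cont : Continuous qz := by
  apply Continuous.if_le (by fun_prop) (by fun_prop) (by fun_prop) (by fun_prop)
  intro x hx
  norm_num [hx]
  rw [show 2*π*(1/2 : ℝ) = π by ring, sin_pi]

lemma q_norm (t : ℝ) : qw t^2 + qx t^2 + qz t^2 = 1 := by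
  unfold qw qx qz
  split_ifs with h1 h2 <;>
    nlinarith [sin_sq_add_cos_sq (2*π*t), sin_sq_add_cos_sq (π*t)]

lemma qw_nonneg (t : ℝ) (h0 : 0 ≤ t) (h1 : t ≤ 1) : 0 ≤ qw t := by
  unfold qw
  have hπ := pi_pos
  split_ifs with ha hb
  · exact cos_nonneg_of_mem_Icc ⟨by nlinarith, by nlinarith⟩
  · exact le_refl 0
  · have : cos (π*t) ≤ 0 := cos_nonpos_of_pi_div_two_le_of_le (by nlinarith) (by nlinarith)
    linarith

lemma matchA (t : ℝ) :
    rotMat (cos (2*π*t)) 0 0 (-sin (2*π*t)) =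
      frameMatrix (fun i => cos (π * (2*(2*t))) * eOne i + sin (π * (2*(2*t))) * eBar i) eTwo := by
  have h := sin_sq_add_cos_sq (2*π*t)
  rw [show π * (2*(2*t)) = 2*(2*π*t) by ring, Real.cos_two_mul, Real.sin_two_mul]
  ext i j
  fin_cases i <;> fin_cases j <;>
    (simp [rotMat, frameMatrix, cross_apply, eOne, eTwo, eBar, Matrix.vecHead, Matrix.vecTail] <;>
      (try field_simp) <;> nlinarith [h])

lemma matchB (t : ℝ) :
    rotMat 0 (-cos (2*π*t)) 0 (-sin (2*π*t)) =
      frameMatrix (-eOne) (fun i => cos (π * (2*(2*t) - 1)) * eTwo i - sin (π * (2*(2*t) - 1)) * eBar i) := by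
  have h := sin_sq_add_cos_sq (2*π*t)
  rw [show π * (2*(2*t) - 1) = 2*(2*π*t) - π by ring, Real.cos_sub_pi, Real.sin_sub_pi,
    Real.cos_two_mul, Real.sin_two_mul]
  ext i j
  fin_cases i <;> fin_cases j <;>
    (simp [rotMat, frameMatrix, cross_apply, eOne, eTwo, eBar, Matrix.vecHead, Matrix.vecTail] <;>
      (try field_simp) <;> nlinarith [h])

lemma matchC (t : ℝ) :
    rotMat (-cos (π*t)) (sin (π*t)) 0 0 =
      frameMatrix (fun i => -cos (π * (2*t - 1)) * eOne i + sin (π * (2*t - 1)) * eTwo i)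
        (fun i => -cos (π * (2*t - 1)) * eTwo i - sin (π * (2*t - 1)) * eOne i) := by
  have h := sin_sq_add_cos_sq (π*t)
  rw [show π * (2*t - 1) = 2*(π*t) - π by ring, Real.cos_sub_pi, Real.sin_sub_pi,
    Real.cos_two_mul, Real.sin_two_mul]
  ext i j
  fin_cases i <;> fin_cases j <;>
    (simp [rotMat, frameMatrix, cross_apply, eOne, eTwo, eBar, Matrix.vecHead, Matrix.vecTail] <;>
      (try field_simp) <;> nlinarith [h])

open unitInterval in
/-- components of the straight-line homotopy (in quaternion space) from the lift to `1`. -/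
def Wf (p : I × I) : ℝ := (1 - (p.1 : ℝ)) * qw p.2 + p.1
open unitInterval in
def Xf (p : I × I) : ℝ := (1 - (p.1 : ℝ)) * qx p.2
open unitInterval in
def Zf (p : I × I) : ℝ := (1 - (p.1 : ℝ)) * qz p.2

open unitInterval in
lemma denom_pos (p : I × I) : 0 < Wf p^2 + Xf p^2 + 0^2 + Zf p^2 := by
  have hn := q_norm (p.2 : ℝ)
  have hw := qw_nonneg (p.2 : ℝ) p.2.2.1 p.2.2.2
  have hs0 : (0:ℝ) ≤ (p.1 : ℝ) := p.1.2.1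
  have hs1 : (p.1:ℝ) ≤ 1 := p.1.2.2
  unfold Wf Xf Zf
  have key : ((1 - (p.1:ℝ)) * qw p.2 + p.1)^2 + ((1 - (p.1:ℝ)) * qx p.2)^2 + 0^2
      + ((1 - (p.1:ℝ)) * qz p.2)^2
      = (1 - (p.1:ℝ))^2 + (p.1:ℝ)^2 + 2*(p.1:ℝ)*(1 - (p.1:ℝ))*(qw p.2) := by
    linear_combination (1 - (p.1:ℝ))^2 * hn
  rw [key]
  nlinarith [sq_nonneg (1 - 2*(p.1:ℝ)),
    mul_nonneg (mul_nonneg hs0 (by linarith : (0:ℝ) ≤ 1 - (p.1:ℝ))) hw]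

open unitInterval in
lemma Hfun_cont : Continuous fun p : I × I => rotMat (Wf p) (Xf p) 0 (Zf p) := by
  have hW : Continuous Wf := by unfold Wf; fun_prop
  have hX : Continuous Xf := by unfold Xf; fun_prop
  have hZ : Continuous Zf := by unfold Zf; fun_prop
  have hn : ∀ p : I × I, Wf p^2 + Xf p^2 + (0:ℝ)^2 + Zf p^2 ≠ 0 :=
    fun p => ne_of_gt (denom_pos p)
  apply continuous_matrix
  intro i j
  fin_cases i <;> fin_cases j <;>
    · simp only [rotMat, Matrix.of_apply, Matrix.cons_val', Matrix.cons_val_zero,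
        Matrix.cons_val_one, Matrix.head_cons, Matrix.empty_val', Matrix.cons_val_fin_one,
        Matrix.head_fin_const]
      exact Continuous.div (by fun_prop) (by fun_prop) hn

open unitInterval in
def Hfun (p : I × I) : SO3 :=
  ⟨rotMat (Wf p) (Xf p) 0 (Zf p),
   rotMat_mem _ _ _ _ (ne_of_gt (denom_pos p))⟩

/-- The loop `(⁺₊⁺₋)·(⁺₋⁻₋)·(⁻₋⁺₊)` of standard frame paths is null-homotopic in `SO(3)`:
it is path-homotopic, rel endpoints, to the constant loop at the identity. -/
theorem loop_ppm_pmm_mmp_nullhomotopic :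
    ((pathA.trans pathB).trans pathC).Homotopic (Path.refl so3One) := by
  refine ⟨{ toFun := Hfun, continuous_toFun := ?_, map_zero_left := ?_, map_one_left := ?_, prop' := ?_ }⟩
  · exact Continuous.subtype_mk Hfun_cont _
  · intro t
    apply Subtype.ext
    have ht0 : (0:ℝ) ≤ (t:ℝ) := t.2.1
    have ht1 : (t:ℝ) ≤ 1 := t.2.2
    show rotMat (Wf (0, t)) (Xf (0, t)) 0 (Zf (0, t)) = _
    have hW : Wf (0, t) = qw t := by simp [Wf]
    have hX : Xf (0, t) = qx t := by simp [Xf]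
    have hZ : Zf (0, t) = qz t := by simp [Zf]
    rw [hW, hX, hZ]
    simp only [Path.coe_toContinuousMap]
    rw [Path.trans_apply]
    split_ifs with h1
    · rw [Path.trans_apply]
      split_ifs with h2
      · have h2' : 2*(t:ℝ) ≤ 1/2 := h2
        rw [qw, qx, qz, if_pos (show (t:ℝ) ≤ 1/4 by linarith),
          if_pos (show (t:ℝ) ≤ 1/4 by linarith), if_pos h1]
        exact matchA t
      · have h2' : ¬ (2*(t:ℝ) ≤ 1/2) := h2
        rw [qw, qx, qz, if_neg (show ¬ (t:ℝ) ≤ 1/4 by push_neg at h2' ⊢; linarith),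
          if_neg (show ¬ (t:ℝ) ≤ 1/4 by push_neg at h2' ⊢; linarith), if_pos h1, if_pos h1,
          if_pos h1]
        exact matchB t
    · rw [qw, qx, qz, if_neg (show ¬ (t:ℝ) ≤ 1/4 by push_neg at h1 ⊢; linarith),
        if_neg (show ¬ (t:ℝ) ≤ 1/4 by push_neg at h1 ⊢; linarith), if_neg h1, if_neg h1, if_neg h1]
      exact matchC t
  · intro t
    apply Subtype.ext
    show rotMat (Wf (1, t)) (Xf (1, t)) 0 (Zf (1, t)) = _
    have hW : Wf (1, t) = 1 := by simp [Wf]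
    have hX : Xf (1, t) = 0 := by simp [Xf]
    have hZ : Zf (1, t) = 0 := by simp [Zf]
    rw [hW, hX, hZ, rotMat_one]
    rfl
  · intro s t ht
    simp only [Set.mem_insert_iff, Set.mem_singleton_iff] at ht
    apply Subtype.ext
    rcases ht with rfl | rfl
    · show rotMat (Wf (s, 0)) (Xf (s, 0)) 0 (Zf (s, 0)) = _
      have hq : qw (0:ℝ) = 1 := by norm_num [qw]
      have hW : Wf (s, 0) = 1 := by
        show (1 - (s:ℝ)) * qw (0:ℝ) + (s:ℝ) = 1
        rw [hq]; ring
      have hX : Xf (s, 0) = 0 := by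
        show (1 - (s:ℝ)) * qx (0:ℝ) = 0
        norm_num [qx]
      have hZ : Zf (s, 0) = 0 := by
        show (1 - (s:ℝ)) * qz (0:ℝ) = 0
        norm_num [qz]
      rw [hW, hX, hZ, rotMat_one]
      rw [show (((pathA.trans pathB).trans pathC).toContinuousMap) 0
            = ((pathA.trans pathB).trans pathC) 0 from rfl, Path.source]
      rfl
    · show rotMat (Wf (s, 1)) (Xf (s, 1)) 0 (Zf (s, 1)) = _
      have hq : qw (1:ℝ) = 1 := by norm_num [qw, Real.cos_pi]
      have hW : Wf (s, 1) = 1 := by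
        show (1 - (s:ℝ)) * qw (1:ℝ) + (s:ℝ) = 1
        rw [hq]; ring
      have hX : Xf (s, 1) = 0 := by
        show (1 - (s:ℝ)) * qx (1:ℝ) = 0
        norm_num [qx, Real.sin_pi]
      have hZ : Zf (s, 1) = 0 := by
        show (1 - (s:ℝ)) * qz (1:ℝ) = 0
        norm_num [qz]
      rw [hW, hX, hZ, rotMat_one]
      rw [show (((pathA.trans pathB).trans pathC).toContinuousMap) 1
            = ((pathA.trans pathB).trans pathC) 1 from rfl, Path.target]
      rfl

end
end

section
/- Let V be a finite type, let σ and τ be fixed-point-free involutions of V (permutations with σ² = 1, τ² = 1, and σ v ≠ v, τ v ≠ v for all v), and let λ : V → ZMod 2 be a labeling such that λ(σ v) = λ(v) + 1 for every v ∈ V. Then for every orbit O of the subgroup of permutations of V generated by σ and τ: (a) the cardinality of O is even, and (b) the cardinality of the set {w ∈ O | λ(τ w) = λ(w)} is divisible by 4. (Part (b) says that in each connected component of the graph whose edges are the σ-pairs and τ-pairs — each such component being an even cycle alternating σ-edges and τ-edges — the number of τ-edges joining vertices with equal labels, i.e. the number of oriented edges, is even.) -/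
open Finset

/-- Let `σ`, `τ` be fixed-point-free involutions of a finite type `V` and let
`lab : V → ZMod 2` be a labeling with `lab (σ v) = lab v + 1` for all `v`.  Then every
orbit `O` of the subgroup generated by `σ` and `τ` has even cardinality, and the number of
`w ∈ O` with `lab (τ w) = lab w` is divisible by `4` (i.e. in each component of the
alternating `σ`/`τ`-cycle graph, the number of oriented `τ`-edges is even). -/
theorem orbits_even_and_oriented_edges_even
    (V : Type) [Fintype V] (σ τ : Equiv.Perm V)
    (hσinv : ∀ v, σ (σ v) = v) (hτinv : ∀ v, τ (τ v) = v)
    (hσfpf : ∀ v, σ v ≠ v) (hτfpf : ∀ v, τ v ≠ v)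
    (lab : V → ZMod 2) (hlab : ∀ v, lab (σ v) = lab v + 1)
    (v : V) :
    Even (MulAction.orbit (↥(Subgroup.closure {σ, τ})) v).ncard ∧
      4 ∣ Set.ncard
          {w ∈ MulAction.orbit (↥(Subgroup.closure {σ, τ})) v | lab (τ w) = lab w} := by
  classical
  set ρ : Equiv.Perm V := τ * σ with hρdef
  have hρapp : ∀ w, ρ w = τ (σ w) := fun w => rfl
  have hσ2 : σ * σ = 1 := Equiv.ext hσinv
  have hτ2 : τ * τ = 1 := Equiv.ext hτinv
  have hσi : σ⁻¹ = σ := by rw [eq_comm, eq_inv_iff_mul_eq_one, hσ2]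
  have hτi : τ⁻¹ = τ := by rw [eq_comm, eq_inv_iff_mul_eq_one, hτ2]
  have hρi : ρ⁻¹ = σ * τ := by rw [hρdef, mul_inv_rev, hσi, hτi]
  have hconjσ : σ * ρ * σ⁻¹ = ρ⁻¹ := by
    rw [hσi, hρi, hρdef, mul_assoc, mul_assoc, hσ2, mul_one]
  have hconjτ : τ * ρ * τ⁻¹ = ρ⁻¹ := by
    rw [hτi, hρi, hρdef, ← mul_assoc, hτ2, one_mul]
  have hσz : ∀ (k : ℤ) (w : V), σ ((ρ ^ k) w) = (ρ ^ (-k)) (σ w) := by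
    intro k w
    have h : σ * ρ ^ k * σ⁻¹ = ρ ^ (-k) := by
      rw [← conj_zpow, hconjσ, zpow_neg, inv_zpow]
    have h2 : σ * ρ ^ k = ρ ^ (-k) * σ := by
      rw [← h, inv_mul_cancel_right]
    calc σ ((ρ ^ k) w) = (σ * ρ ^ k) w := rfl
      _ = (ρ ^ (-k) * σ) w := by rw [h2]
      _ = (ρ ^ (-k)) (σ w) := rfl
  have hτz : ∀ (k : ℤ) (w : V), τ ((ρ ^ k) w) = (ρ ^ (-k)) (τ w) := by
    intro k w
    have h : τ * ρ ^ k * τ⁻¹ = ρ ^ (-k) := by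
      rw [← conj_zpow, hconjτ, zpow_neg, inv_zpow]
    have h2 : τ * ρ ^ k = ρ ^ (-k) * τ := by
      rw [← h, inv_mul_cancel_right]
    calc τ ((ρ ^ k) w) = (τ * ρ ^ k) w := rfl
      _ = (ρ ^ (-k) * τ) w := by rw [h2]
      _ = (ρ ^ (-k)) (τ w) := rfl
  have hzz : ∀ (a b : ℤ) (w : V), (ρ ^ a) ((ρ ^ b) w) = (ρ ^ (a + b)) w := by
    intro a b w
    rw [zpow_add]
    rfl
  have hτv : ∀ w, τ w = ρ (σ w) := by
    intro w
    rw [hρapp, hσinv]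
  have hzz1 : ∀ (a : ℤ) (w : V), (ρ ^ a) (ρ w) = (ρ ^ (a + 1)) w := by
    intro a w
    have h := hzz a 1 w
    rwa [zpow_one] at h
  set A : Finset V := Finset.univ.filter (fun w => ∃ k : ℤ, (ρ ^ k) v = w) with hA
  set B : Finset V := Finset.univ.filter (fun w => ∃ k : ℤ, (ρ ^ k) (σ v) = w) with hB
  have memA : ∀ w, w ∈ A ↔ ∃ k : ℤ, (ρ ^ k) v = w := by
    intro w; rw [hA]; simp
  have memB : ∀ w, w ∈ B ↔ ∃ k : ℤ, (ρ ^ k) (σ v) = w := by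
    intro w; rw [hB]; simp
  have hvA : v ∈ A := (memA v).2 ⟨0, rfl⟩
  have hσAB : ∀ w ∈ A, σ w ∈ B := by
    intro w hw
    obtain ⟨k, hk⟩ := (memA w).1 hw
    refine (memB _).2 ⟨-k, ?_⟩
    rw [← hk, hσz]
  have hσBA : ∀ w ∈ B, σ w ∈ A := by
    intro w hw
    obtain ⟨k, hk⟩ := (memB w).1 hw
    refine (memA _).2 ⟨-k, ?_⟩
    rw [← hk, hσz, hσinv]
  have hτAB : ∀ w ∈ A, τ w ∈ B := by
    intro w hw
    obtain ⟨k, hk⟩ := (memA w).1 hw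
    refine (memB _).2 ⟨-k + 1, ?_⟩
    rw [← hk, hτz, hτv v, hzz1]
  have hτBA : ∀ w ∈ B, τ w ∈ A := by
    intro w hw
    obtain ⟨k, hk⟩ := (memB w).1 hw
    refine (memA _).2 ⟨-k + 1, ?_⟩
    rw [← hk, hτz, ← hρapp, hzz1]
  have hρA : ∀ w ∈ A, ρ w ∈ A := by
    intro w hw
    obtain ⟨k, hk⟩ := (memA w).1 hw
    refine (memA _).2 ⟨1 + k, ?_⟩
    rw [← hzz 1 k v, zpow_one, hk]
  have hdisj : Disjoint A B := by
    rw [Finset.disjoint_left]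
    intro w hwA hwB
    obtain ⟨a, ha⟩ := (memA w).1 hwA
    obtain ⟨b, hb⟩ := (memB w).1 hwB
    have hk : (ρ ^ (a - b)) v = σ v := by
      have h1 : (ρ ^ (-b)) ((ρ ^ b) (σ v)) = (ρ ^ (-b)) w := by rw [hb]
      rw [hzz] at h1
      simp only [neg_add_cancel, zpow_zero, Equiv.Perm.coe_one, id_eq] at h1
      rw [← ha, hzz] at h1
      rw [show a - b = -b + a by ring]
      exact h1.symm
    rcases Int.even_or_odd (a - b) with ⟨j, hj⟩ | ⟨j, hj⟩
    · refine hσfpf ((ρ ^ j) v) ?_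
      calc σ ((ρ ^ j) v) = (ρ ^ (-j)) (σ v) := hσz _ _
        _ = (ρ ^ (-j)) ((ρ ^ (a - b)) v) := by rw [hk]
        _ = (ρ ^ (-j + (a - b))) v := hzz _ _ _
        _ = (ρ ^ j) v := by rw [show -j + (a - b) = j by omega]
    · refine hτfpf ((ρ ^ (j + 1)) v) ?_
      calc τ ((ρ ^ (j + 1)) v) = (ρ ^ (-(j + 1))) (τ v) := hτz _ _
        _ = (ρ ^ (-(j + 1))) ((ρ ^ (1 : ℤ)) (σ v)) := by rw [zpow_one, ← hτv v]
        _ = (ρ ^ (-(j + 1) + 1)) (σ v) := hzz _ _ _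
        _ = (ρ ^ (-(j + 1) + 1)) ((ρ ^ (a - b)) v) := by rw [hk]
        _ = (ρ ^ (-(j + 1) + 1 + (a - b))) v := hzz _ _ _
        _ = (ρ ^ (j + 1)) v := by rw [show -(j + 1) + 1 + (a - b) = j + 1 by omega]
  -- the orbit is A ∪ B
  have hστmem : ∀ x ∈ ({σ, τ} : Set (Equiv.Perm V)), ∀ w ∈ A ∪ B, x w ∈ A ∪ B := by
    intro x hx w hw
    rcases Finset.mem_union.1 hw with hw | hw <;>
      rcases hx with rfl | hx
    · exact Finset.mem_union.2 (Or.inr (hσAB w hw))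
    · rw [Set.mem_singleton_iff] at hx; subst hx
      exact Finset.mem_union.2 (Or.inr (hτAB w hw))
    · exact Finset.mem_union.2 (Or.inl (hσBA w hw))
    · rw [Set.mem_singleton_iff] at hx; subst hx
      exact Finset.mem_union.2 (Or.inl (hτBA w hw))
  have hG : ∀ g ∈ Subgroup.closure ({σ, τ} : Set (Equiv.Perm V)),
      ∀ w ∈ A ∪ B, g w ∈ A ∪ B := by
    intro g hg
    induction hg using Subgroup.closure_induction with
    | mem x hx => exact hστmem x hx
    | one => intro w hw; simpa using hw
    | mul x y hx hy px py =>
        intro w hw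
        have h1 := py w hw
        have h2 := px _ h1
        simpa using h2
    | inv x hx px =>
        intro w hw
        have himg : (A ∪ B).image x = A ∪ B := by
          apply Finset.eq_of_subset_of_card_le
          · intro u hu
            obtain ⟨u', hu', rfl⟩ := Finset.mem_image.1 hu
            exact px u' hu'
          · rw [Finset.card_image_of_injective _ x.injective]
        rw [← himg] at hw
        obtain ⟨u, hu, rfl⟩ := Finset.mem_image.1 hw
        simpa using hu
  have hρG : ρ ∈ Subgroup.closure ({σ, τ} : Set (Equiv.Perm V)) := by
    rw [hρdef]
    exact mul_mem (Subgroup.subset_closure (by simp)) (Subgroup.subset_closure (by simp))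
  have hσG : σ ∈ Subgroup.closure ({σ, τ} : Set (Equiv.Perm V)) :=
    Subgroup.subset_closure (by simp)
  have hOrb : MulAction.orbit (↥(Subgroup.closure ({σ, τ} : Set (Equiv.Perm V)))) v
      = ↑(A ∪ B) := by
    ext w
    constructor
    · rintro ⟨g, rfl⟩
      have : (g : Equiv.Perm V) v ∈ A ∪ B := hG g g.2 v (Finset.mem_union.2 (Or.inl hvA))
      exact this
    · intro hw
      rcases Finset.mem_union.1 hw with hw | hw
      · obtain ⟨k, hk⟩ := (memA w).1 hw
        exact ⟨⟨ρ ^ k, zpow_mem hρG k⟩, hk⟩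
      · obtain ⟨k, hk⟩ := (memB w).1 hw
        refine ⟨⟨ρ ^ k * σ, mul_mem (zpow_mem hρG k) hσG⟩, ?_⟩
        show (ρ ^ k * σ) v = w
        rw [Equiv.Perm.mul_apply, hk]
  -- counting
  set T : V → Prop := fun w => lab (τ w) = lab w with hT
  set TA : Finset V := A.filter T with hTA
  set TB : Finset V := B.filter T with hTBdef
  set TcB : Finset V := B.filter (fun w => ¬ T w) with hTcB
  have hBA : B = A.image σ := by
    ext w
    constructor
    · intro hw
      exact Finset.mem_image.2 ⟨σ w, hσBA w hw, hσinv w⟩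
    · intro hw
      obtain ⟨u, hu, rfl⟩ := Finset.mem_image.1 hw
      exact hσAB u hu
  have hcardAB : A.card = B.card := by
    rw [hBA, Finset.card_image_of_injective _ σ.injective]
  have hTBA : TB = TA.image τ := by
    ext w
    rw [hTBdef, hTA]
    simp only [Finset.mem_image, Finset.mem_filter]
    constructor
    · intro ⟨hwB, hwT⟩
      refine ⟨τ w, ⟨hτBA w hwB, ?_⟩, hτinv w⟩
      show lab (τ (τ w)) = lab (τ w)
      rw [hτinv w]
      exact hwT.symm
    · rintro ⟨u, ⟨huA, huT⟩, rfl⟩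
      refine ⟨hτAB u huA, ?_⟩
      show lab (τ (τ u)) = lab (τ u)
      rw [hτinv u]
      exact huT.symm
  have hcardT : TA.card = TB.card := by
    rw [hTBA, Finset.card_image_of_injective _ τ.injective]
  have hAρ : A.image ρ = A := by
    apply Finset.eq_of_subset_of_card_le
    · intro u hu
      obtain ⟨u', hu', rfl⟩ := Finset.mem_image.1 hu
      exact hρA u' hu'
    · rw [Finset.card_image_of_injective _ ρ.injective]
  have hsum1 : ∑ w ∈ A, lab (ρ w) = ∑ w ∈ A, lab w := by
    conv_rhs => rw [← hAρ]
    rw [Finset.sum_image (fun a _ b _ h => ρ.injective h)]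
  have hsum0 : ∑ w ∈ A, (lab (ρ w) + lab w) = 0 := by
    rw [Finset.sum_add_distrib, hsum1, CharTwo.add_self_eq_zero]
  have hterm : ∀ w, lab (ρ w) + lab w = 1 + (lab (τ (σ w)) + lab (σ w)) := by
    intro w
    rw [hρapp, hlab w]
    have h2 : (2 : ZMod 2) = 0 := by decide
    linear_combination -h2
  have hone : ∑ _w ∈ A, (1 : ZMod 2) = (A.card : ZMod 2) := by simp
  have hmain : (A.card : ZMod 2) + ∑ u ∈ B, (lab (τ u) + lab u) = 0 := by
    calc (A.card : ZMod 2) + ∑ u ∈ B, (lab (τ u) + lab u)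
        = ∑ _w ∈ A, (1 : ZMod 2) + ∑ w ∈ A, (lab (τ (σ w)) + lab (σ w)) := by
          rw [hone, hBA, Finset.sum_image (fun a _ b _ h => σ.injective h)]
      _ = ∑ w ∈ A, (1 + (lab (τ (σ w)) + lab (σ w))) := Finset.sum_add_distrib.symm
      _ = ∑ w ∈ A, (lab (ρ w) + lab w) := Finset.sum_congr rfl fun w _ => (hterm w).symm
      _ = 0 := hsum0
  have hsplit : ∑ u ∈ B, (lab (τ u) + lab u) = (TcB.card : ZMod 2) := by
    rw [← Finset.sum_filter_add_sum_filter_not B T]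
    have hz : ∑ u ∈ B.filter T, (lab (τ u) + lab u) = 0 := by
      apply Finset.sum_eq_zero
      intro u hu
      have hTu : lab (τ u) = lab u := (Finset.mem_filter.1 hu).2
      rw [hTu, CharTwo.add_self_eq_zero]
    have ho : ∑ u ∈ B.filter (fun w => ¬ T w), (lab (τ u) + lab u) = (TcB.card : ZMod 2) := by
      have hval : ∀ a b : ZMod 2, a ≠ b → a + b = 1 := by decide
      calc ∑ u ∈ B.filter (fun w => ¬ T w), (lab (τ u) + lab u)
          = ∑ _u ∈ B.filter (fun w => ¬ T w), (1 : ZMod 2) :=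
            Finset.sum_congr rfl fun u hu => hval _ _ (Finset.mem_filter.1 hu).2
        _ = (TcB.card : ZMod 2) := by rw [hTcB]; simp
    rw [hz, zero_add, ho]
  have hmodeq : A.card % 2 = TcB.card % 2 := by
    have hcast : (A.card : ZMod 2) = (TcB.card : ZMod 2) := by
      have h := hmain
      rw [hsplit, add_eq_zero_iff_eq_neg, CharTwo.neg_eq] at h
      exact h
    exact (ZMod.natCast_eq_natCast_iff' _ _ _).1 hcast
  have hcardsplit : TB.card + TcB.card = B.card := by
    rw [hTBdef, hTcB]
    exact Finset.card_filter_add_card_filter_not (p := T)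
  have h2dvd : 2 ∣ TB.card := by omega
  obtain ⟨m, hm⟩ := h2dvd
  constructor
  · rw [hOrb, Set.ncard_coe_finset, Finset.card_union_of_disjoint hdisj]
    exact ⟨A.card, by omega⟩
  · have hsetT : {w ∈ MulAction.orbit (↥(Subgroup.closure ({σ, τ} : Set (Equiv.Perm V)))) v |
        lab (τ w) = lab w} = ↑((A ∪ B).filter T) := by
      rw [Finset.coe_filter, hOrb]
      ext w
      simp [hT]
    rw [hsetT, Set.ncard_coe_finset, Finset.filter_union,
      Finset.card_union_of_disjoint (Finset.disjoint_filter_filter hdisj)]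
    refine ⟨m, ?_⟩
    have : (A.filter T).card = TA.card := by rw [hTA]
    have : (B.filter T).card = TB.card := by rw [hTBdef]
    omega
end

section
/- Let S be a finite type, let μ : S → S be a fixed-point-free involution (μ ∘ μ = id and μ v ≠ v for all v), and let s : S → ZMod 2 and λ : S → ZMod 2 be functions such that for every v ∈ S: if s(v) = s(μ v) then λ(v) + λ(μ v) = 1, and if s(v) ≠ s(μ v) then λ(v) = 0 and λ(μ v) = 0. Then there exists an integer k such that (card {v ∈ S | s v = 0} : ℤ) − (card {v ∈ S | s v = 1} : ℤ) = 2·k and Σ_{v ∈ S} λ(v) = (k : ZMod 2). In other words, the sum of the labels λ equals, modulo 2, half the difference between the number of elements on which s vanishes and the number on which s equals 1. -/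
open Finset

theorem sum_labels_aux {S : Type} [DecidableEq S] (μ : S → S)
    (hinv : ∀ v, μ (μ v) = v) (hfpf : ∀ v, μ v ≠ v)
    (s lab : S → ZMod 2)
    (heq : ∀ v, s v = s (μ v) → lab v + lab (μ v) = 1)
    (hne : ∀ v, s v ≠ s (μ v) → lab v = 0 ∧ lab (μ v) = 0) :
    ∀ t : Finset S, (∀ v ∈ t, μ v ∈ t) →
    ∃ k : ℤ,
      ((t.filter (fun v => s v = 0)).card : ℤ)
          - ((t.filter (fun v => s v = 1)).card : ℤ) = 2 * k ∧
      (∑ v ∈ t, lab v) = (k : ZMod 2) := by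
  intro t
  induction t using Finset.strongInduction with
  | _ t ih =>
    intro hclosed
    rcases t.eq_empty_or_nonempty with rfl | ⟨v, hv⟩
    · exact ⟨0, by simp, by simp⟩
    have hμv : μ v ∈ t := hclosed v hv
    have hvne : v ≠ μ v := fun h => hfpf v h.symm
    set t' := t \ {v, μ v} with ht'
    have hvt' : v ∉ t' := by simp [ht']
    have hμvt' : μ v ∉ t' := by simp [ht']
    have hteq : t = insert v (insert (μ v) t') := by
      ext w
      simp only [ht', Finset.mem_insert, Finset.mem_sdiff, Finset.mem_singleton]
      constructor
      · intro hw
        by_cases h1 : w = v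
        · exact Or.inl h1
        by_cases h2 : w = μ v
        · exact Or.inr (Or.inl h2)
        · exact Or.inr (Or.inr ⟨hw, not_or.mpr ⟨h1, h2⟩⟩)
      · rintro (rfl | rfl | ⟨hw, _⟩) <;> assumption
    have hsub : t' ⊂ t :=
      (Finset.ssubset_iff_of_subset Finset.sdiff_subset).mpr ⟨v, hv, hvt'⟩
    have hclosed' : ∀ w ∈ t', μ w ∈ t' := by
      intro w hw
      simp only [ht', Finset.mem_sdiff, Finset.mem_insert, Finset.mem_singleton] at hw ⊢
      refine ⟨hclosed w hw.1, ?_⟩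
      rintro (h | h)
      · exact hw.2 (Or.inr (by rw [← hinv w, h]))
      · have hwv : w = v := by
          have := congrArg μ h
          rwa [hinv, hinv] at this
        exact hw.2 (Or.inl hwv)
    obtain ⟨k, hk1, hk2⟩ := ih t' hsub hclosed'
    have hvnotins : v ∉ insert (μ v) t' := by
      simp [hvne, hvt']
    have hsum : ∑ w ∈ t, lab w = lab v + lab (μ v) + ∑ w ∈ t', lab w := by
      rw [hteq, Finset.sum_insert hvnotins, Finset.sum_insert hμvt']; ring
    have htwo : ∀ x : ZMod 2, x = 0 ∨ x = 1 := by decide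
    have hfilt : ∀ p : ZMod 2,
        (t.filter (fun w => s w = p)).card =
        ((t'.filter (fun w => s w = p)).card + (if s v = p then 1 else 0))
          + (if s (μ v) = p then 1 else 0) := by
      intro p
      rw [hteq, Finset.filter_insert, Finset.filter_insert]
      by_cases h1 : s v = p <;> by_cases h2 : s (μ v) = p <;>
        simp [h1, h2, Finset.card_insert_of_notMem,
          hvt', hμvt', hvne, hvnotins,
          Finset.mem_insert, Finset.mem_filter]
    rcases htwo (s v) with hsv | hsv <;> rcases htwo (s (μ v)) with hsμ | hsμ
    · -- both 0
      have hl : lab v + lab (μ v) = 1 := heq v (by rw [hsv, hsμ])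
      refine ⟨k + 1, ?_, ?_⟩
      · have h0 := hfilt 0
        have h1 := hfilt 1
        simp [hsv, hsμ] at h0 h1
        rw [h0, h1]; push_cast; linarith
      · rw [hsum, hl, hk2]; push_cast; ring
    · -- 0 and 1
      have hl := hne v (by rw [hsv, hsμ]; decide)
      refine ⟨k, ?_, ?_⟩
      · have h0 := hfilt 0
        have h1 := hfilt 1
        simp [hsv, hsμ] at h0 h1
        rw [h0, h1]; push_cast; linarith
      · rw [hsum, hl.1, hl.2, hk2]; ring
    · -- 1 and 0
      have hl := hne v (by rw [hsv, hsμ]; decide)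
      refine ⟨k, ?_, ?_⟩
      · have h0 := hfilt 0
        have h1 := hfilt 1
        simp [hsv, hsμ] at h0 h1
        rw [h0, h1]; push_cast; linarith
      · rw [hsum, hl.1, hl.2, hk2]; ring
    · -- both 1
      have hl : lab v + lab (μ v) = 1 := heq v (by rw [hsv, hsμ])
      refine ⟨k - 1, ?_, ?_⟩
      · have h0 := hfilt 0
        have h1 := hfilt 1
        simp [hsv, hsμ] at h0 h1
        rw [h0, h1]; push_cast; linarith
      · rw [hsum, hl, hk2]; push_cast
        have hneg : (-1 : ZMod 2) = 1 := by decide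
        rw [sub_eq_add_neg, hneg]; ring

/-- Let `μ` be a fixed-point-free involution of a finite type `S`, and let
`s, λ : S → ZMod 2` be such that `μ`-paired elements with equal `s`-values have
`λ`-labels summing to `1`, while `μ`-paired elements with distinct `s`-values both have
label `0`.  Then the total sum of the labels equals, modulo 2, half the (even) difference
`#{v | s v = 0} − #{v | s v = 1}`. -/
theorem sum_labels_eq_half_sign_difference
    (S : Type) [Fintype S] (μ : S → S)
    (hinv : ∀ v, μ (μ v) = v) (hfpf : ∀ v, μ v ≠ v)
    (s lab : S → ZMod 2)
    (heq : ∀ v, s v = s (μ v) → lab v + lab (μ v) = 1)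
    (hne : ∀ v, s v ≠ s (μ v) → lab v = 0 ∧ lab (μ v) = 0) :
    ∃ k : ℤ,
      ((univ.filter (fun v => s v = 0)).card : ℤ)
          - ((univ.filter (fun v => s v = 1)).card : ℤ) = 2 * k ∧
      (∑ v, lab v) = (k : ZMod 2) := by
  classical
  exact sum_labels_aux μ hinv hfpf s lab heq hne univ (fun v _ => Finset.mem_univ _)
end
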